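/- arXiv:math/0703110 — 3 statements merged into one kernel-verified Lean document; each statement's English description precedes it below -/
import Mathlib

section
/- Let α ∈ ℕ₀^n be a multi-index and D^α = ∂^{|α|}/∂x^α the corresponding differential operator. Then for every homogeneous polynomial f_m of degree m in n variables with complex coefficients, ‖D^α f_m‖_rF ≤ √((2m)^{|α|}) ‖f_m‖_rF. -/
open MvPolynomial MeasureTheory Filter Matrix

noncomputable section

/-- Evaluation of a complex-coefficient polynomial at a real point of `ℝⁿ`. -/
def evalR {n : ℕ} (P : MvPolynomial (Fin n) ℂ) (x : Fin n → ℝ) : ℂ :=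
  MvPolynomial.eval (fun i => (x i : ℂ)) P

/-- The real Fischer inner product `⟨f,g⟩_rF = ∫_{ℝⁿ} f(x) conj (g(x)) e^{-|x|²} dx`. -/
def rFInner {n : ℕ} (f g : MvPolynomial (Fin n) ℂ) : ℂ :=
  ∫ x : Fin n → ℝ, evalR f x * (starRingEnd ℂ) (evalR g x) * Real.exp (-(∑ i, x i ^ 2))

/-- The real Fischer norm `‖f‖_rF = ⟨f,f⟩_rF^{1/2}`. -/
def rFNorm {n : ℕ} (f : MvPolynomial (Fin n) ℂ) : ℝ :=
  Real.sqrt (∫ x : Fin n → ℝ, ‖evalR f x‖ ^ 2 * Real.exp (-(∑ i, x i ^ 2)))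

/-- The (complex) Fischer inner product `⟨f,g⟩_F = ∑_α α! c_α conj(d_α)`. -/
def FInner {n : ℕ} (f g : MvPolynomial (Fin n) ℂ) : ℂ :=
  ∑ α ∈ f.support ∪ g.support,
    (∏ i, ((α i).factorial : ℂ)) * MvPolynomial.coeff α f *
      (starRingEnd ℂ) (MvPolynomial.coeff α g)

/-- The (complex) Fischer norm. -/
def FNorm {n : ℕ} (f : MvPolynomial (Fin n) ℂ) : ℝ :=
  Real.sqrt (FInner f f).re

/-- The Laplace operator `Δ = ∑ ∂²/∂xⱼ²` on polynomials. -/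
def lapP {n : ℕ} (f : MvPolynomial (Fin n) ℂ) : MvPolynomial (Fin n) ℂ :=
  ∑ i, MvPolynomial.pderiv i (MvPolynomial.pderiv i f)

/-- The differential operator `D^α = ∂^{|α|}/∂x^α` on polynomials. -/
def DP {n : ℕ} (α : Fin n → ℕ) (f : MvPolynomial (Fin n) ℂ) : MvPolynomial (Fin n) ℂ :=
  (List.finRange n).foldl (fun g i => (fun h => MvPolynomial.pderiv i h)^[α i] g) f

/-- The constant coefficient operator `Q(D)` associated to a polynomial `Q = ∑ c_β x^β`. -/
def QD {n : ℕ} (Q f : MvPolynomial (Fin n) ℂ) : MvPolynomial (Fin n) ℂ :=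
  ∑ β ∈ Q.support, MvPolynomial.coeff β Q • DP (fun i => β i) f

/-- The polynomial `|x|² = x₁² + ⋯ + xₙ²`. -/
def radSq (n : ℕ) : MvPolynomial (Fin n) ℂ :=
  ∑ i : Fin n, (MvPolynomial.X i) ^ 2

/-- `Ii m = ∫₀^∞ e^{-r²} r^m dr`. -/
def Ii (m : ℕ) : ℝ := ∫ r in Set.Ioi (0 : ℝ), Real.exp (-r ^ 2) * r ^ m

/-- `e_{p,m} = 2^p p! (2m+n)(2m+n+2)⋯(2m+n+2(p-1))` (for `n` variables). -/
def epm (n p m : ℕ) : ℕ :=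
  2 ^ p * Nat.factorial p * ∏ i ∈ Finset.range p, (2 * m + n + 2 * i)

/-- The partial derivative `∂/∂xᵢ` of a function on `ℝⁿ`. -/
def pdF {n : ℕ} (i : Fin n) (f : (Fin n → ℝ) → ℂ) : (Fin n → ℝ) → ℂ :=
  fun x => fderiv ℝ f x (Pi.single i 1)

/-- The differential operator `D^α` on functions on `ℝⁿ`. -/
def DF {n : ℕ} (α : Fin n → ℕ) (f : (Fin n → ℝ) → ℂ) : (Fin n → ℝ) → ℂ :=
  (List.finRange n).foldl (fun g i => (pdF i)^[α i] g) f

/-- The Laplace operator `Δ` on functions on `ℝⁿ`. -/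
def lapF {n : ℕ} (f : (Fin n → ℝ) → ℂ) : (Fin n → ℝ) → ℂ :=
  fun x => ∑ i, pdF i (pdF i f) x

/-- The open euclidean ball `B_R = {x ∈ ℝⁿ : |x| < R}`. -/
def euclBall (n : ℕ) (R : ℝ) : Set (Fin n → ℝ) := {x | ∑ i, x i ^ 2 < R ^ 2}

/-- The homogeneous part of degree `m` of the Taylor series of `f` at `0`:
`f_m(x) = ∑_{|α|=m} (1/α!) (∂^α f)(0) x^α`. -/
def homPart {n : ℕ} (f : (Fin n → ℝ) → ℂ) (m : ℕ) (x : Fin n → ℝ) : ℂ :=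
  ∑ α ∈ Finset.Nat.antidiagonalTuple n m,
    (∏ i, ((α i).factorial : ℂ))⁻¹ * DF α f 0 * ∏ i, (x i : ℂ) ^ (α i)

/-- Membership in `A(B_R)`: infinitely differentiable on `B_R`, and the homogeneous Taylor
series converges absolutely and uniformly to `f` on every compact subset of `B_R`. -/
def MemA (n : ℕ) (R : ℝ) (f : (Fin n → ℝ) → ℂ) : Prop :=
  ContDiffOn ℝ (⊤ : ℕ∞) f (euclBall n R) ∧
  ∀ K : Set (Fin n → ℝ), K ⊆ euclBall n R → IsCompact K →
    TendstoUniformlyOn (fun N x => ∑ m ∈ Finset.range N, homPart f m x) f atTop K ∧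
    ∃ g : (Fin n → ℝ) → ℝ,
      TendstoUniformlyOn (fun N x => ∑ m ∈ Finset.range N, ‖homPart f m x‖)
        g atTop K

/-- The operator `Q(D)` on functions on `ℝⁿ`. -/
def QDF {n : ℕ} (Q : MvPolynomial (Fin n) ℂ) (u : (Fin n → ℝ) → ℂ) : (Fin n → ℝ) → ℂ :=
  fun x => ∑ β ∈ Q.support, MvPolynomial.coeff β Q * DF (fun i => β i) u x

/-- The operator `L = Δ^p + ∑_{|α| ≤ k₀} a_α(x) D^α` on functions on `ℝⁿ`. -/
def Lop {n : ℕ} (p k₀ : ℕ) (a : (Fin n → ℕ) → (Fin n → ℝ) → ℂ)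
    (u : (Fin n → ℝ) → ℂ) : (Fin n → ℝ) → ℂ :=
  fun x => (lapF^[p] u) x +
    ∑ l ∈ Finset.range (k₀ + 1), ∑ α ∈ Finset.Nat.antidiagonalTuple n l, a α x * DF α u x

/-- The operator `L = Q(D) + ∑_{|α| ≤ k₀} a_α(x) D^α` on functions on `ℝⁿ`. -/
def LopQ {n : ℕ} (Q : MvPolynomial (Fin n) ℂ) (k₀ : ℕ) (a : (Fin n → ℕ) → (Fin n → ℝ) → ℂ)
    (u : (Fin n → ℝ) → ℂ) : (Fin n → ℝ) → ℂ :=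
  fun x => QDF Q u x +
    ∑ l ∈ Finset.range (k₀ + 1), ∑ α ∈ Finset.Nat.antidiagonalTuple n l, a α x * DF α u x

/-- The complex partial derivative `∂/∂zᵢ` of a function on `ℂⁿ`. -/
def pdC {n : ℕ} (i : Fin n) (f : (Fin n → ℂ) → ℂ) : (Fin n → ℂ) → ℂ :=
  fun z => fderiv ℂ f z (Pi.single i 1)

/-- The differential operator `D^α` on functions on `ℂⁿ`. -/
def DFc {n : ℕ} (α : Fin n → ℕ) (f : (Fin n → ℂ) → ℂ) : (Fin n → ℂ) → ℂ :=
  (List.finRange n).foldl (fun g i => (pdC i)^[α i] g) f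

/-- The operator `B(D) = ∑_{i,j} B_{ij} ∂_i ∂_j` on functions on `ℂⁿ`, for the quadratic
form `B(ζ) = ζᵗBζ`. -/
def BDop {n : ℕ} (B : Matrix (Fin n) (Fin n) ℂ) (f : (Fin n → ℂ) → ℂ) :
    (Fin n → ℂ) → ℂ :=
  fun z => ∑ i, ∑ j, B i j * pdC i (pdC j f) z

/-- The operator `L = (B(D))^p + ∑_{|α| ≤ p} a_α(z) D^α` on functions on `ℂⁿ`. -/
def LC {n : ℕ} (B : Matrix (Fin n) (Fin n) ℂ) (p : ℕ)
    (a : (Fin n → ℕ) → (Fin n → ℂ) → ℂ) (u : (Fin n → ℂ) → ℂ) : (Fin n → ℂ) → ℂ :=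
  fun z => ((BDop B)^[p] u) z +
    ∑ l ∈ Finset.range (p + 1), ∑ α ∈ Finset.Nat.antidiagonalTuple n l, a α z * DFc α u z

end

open Set in
section
namespace Stmt9Aux


noncomputable def Mo (k : ℕ) : ℝ := ∫ t : ℝ, t ^ k * Real.exp (-t ^ 2)

lemma integrable_pow_gauss (k : ℕ) :
    Integrable (fun t : ℝ => t ^ k * Real.exp (-t ^ 2)) := by
  have h := integrable_rpow_mul_exp_neg_mul_sq (b := 1) one_pos
    (s := (k : ℝ)) (lt_of_lt_of_le neg_one_lt_zero (Nat.cast_nonneg k))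
  simpa [Real.rpow_natCast, neg_mul, one_mul] using h

lemma tendsto_pow_gauss_atTop (k : ℕ) :
    Tendsto (fun t : ℝ => t ^ k * Real.exp (-t ^ 2)) atTop (nhds 0) := by
  have h := (rpow_mul_exp_neg_mul_sq_isLittleO_exp_neg (b := 1) one_pos (k : ℝ))
  have hx : Tendsto (fun x : ℝ => x / 2) atTop atTop :=
    tendsto_id.atTop_div_const two_pos
  have h2 : Tendsto (fun x : ℝ => Real.exp (-(1 / 2) * x)) atTop (nhds 0) := by
    have := Real.tendsto_exp_atBot.comp (tendsto_neg_atTop_atBot.comp hx)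
    refine this.congr fun x => ?_
    simp [Function.comp]; ring_nf
  have h3 := h.tendsto_zero_of_tendsto h2
  refine h3.congr fun t => ?_
  rw [Real.rpow_natCast]; ring_nf

lemma tendsto_pow_gauss_atBot (k : ℕ) :
    Tendsto (fun t : ℝ => t ^ k * Real.exp (-t ^ 2)) atBot (nhds 0) := by
  have h := (tendsto_pow_gauss_atTop k).comp tendsto_neg_atBot_atTop
  rw [Function.comp_def] at h
  have h2 : Tendsto (fun t : ℝ => (-1 : ℝ) ^ k * ((-t) ^ k * Real.exp (-(-t) ^ 2))) atBot
      (nhds 0) := by simpa using h.const_mul ((-1 : ℝ) ^ k)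
  refine h2.congr fun t => ?_
  have : ((-1 : ℝ)) ^ k * (-t) ^ k = t ^ k := by
    rw [← mul_pow]; norm_num
  rw [← mul_assoc, this]; ring_nf

lemma hasDerivAt_pow_gauss (k : ℕ) (t : ℝ) :
    HasDerivAt (fun t : ℝ => t ^ (k + 1) * Real.exp (-t ^ 2))
      ((k + 1 : ℝ) * t ^ k * Real.exp (-t ^ 2) - 2 * (t ^ (k + 2) * Real.exp (-t ^ 2))) t := by
  have h1 : HasDerivAt (fun t : ℝ => t ^ (k + 1)) ((k + 1 : ℕ) * t ^ k) t := by
    simpa using hasDerivAt_pow (k + 1) t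
  have hs : HasDerivAt (fun t : ℝ => -t ^ 2) (-(2 * t)) t := by
    simpa using ((hasDerivAt_pow 2 t).fun_neg)
  have h2 : HasDerivAt (fun t : ℝ => Real.exp (-t ^ 2)) (Real.exp (-t ^ 2) * -(2 * t)) t :=
    hs.exp
  have := h1.fun_mul h2
  refine this.congr_deriv ?_
  push_cast
  ring

lemma mo_rec (k : ℕ) : (k + 1 : ℝ) * Mo k = 2 * Mo (k + 2) := by
  have hint : Integrable (fun t : ℝ =>
      (k + 1 : ℝ) * t ^ k * Real.exp (-t ^ 2) - 2 * (t ^ (k + 2) * Real.exp (-t ^ 2))) := by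
    have h1 := (integrable_pow_gauss k).const_mul ((k : ℝ) + 1)
    have h2 := (integrable_pow_gauss (k + 2)).const_mul 2
    exact (h1.sub h2).congr (by filter_upwards with t; simp only [Pi.sub_apply]; ring)
  have hIoi := integral_Ioi_of_hasDerivAt_of_tendsto' (a := (0 : ℝ))
      (fun x _ => hasDerivAt_pow_gauss k x) hint.integrableOn (tendsto_pow_gauss_atTop (k + 1))
  have hIic := integral_Iic_of_hasDerivAt_of_tendsto' (a := (0 : ℝ))
      (fun x _ => hasDerivAt_pow_gauss k x) hint.integrableOn (tendsto_pow_gauss_atBot (k + 1))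
  have htot : (∫ t : ℝ, ((k + 1 : ℝ) * t ^ k * Real.exp (-t ^ 2)
      - 2 * (t ^ (k + 2) * Real.exp (-t ^ 2)))) = 0 := by
    rw [← intervalIntegral.integral_Iic_add_Ioi (b := (0 : ℝ)) hint.integrableOn
      hint.integrableOn, hIoi, hIic]
    ring
  have hsplit : (∫ t : ℝ, ((k + 1 : ℝ) * t ^ k * Real.exp (-t ^ 2)
      - 2 * (t ^ (k + 2) * Real.exp (-t ^ 2)))) = (k + 1 : ℝ) * Mo k - 2 * Mo (k + 2) := by
    rw [integral_sub (((integrable_pow_gauss k).const_mul ((k : ℝ) + 1)).congr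
        (by filter_upwards with t; ring))
      ((integrable_pow_gauss (k + 2)).const_mul 2)]
    have e1 : (∫ t : ℝ, (k + 1 : ℝ) * t ^ k * Real.exp (-t ^ 2))
        = (k + 1 : ℝ) * Mo k := by
      rw [Mo, ← integral_const_mul]
      congr 1; funext t; ring
    have e2 : (∫ t : ℝ, 2 * (t ^ (k + 2) * Real.exp (-t ^ 2))) = 2 * Mo (k + 2) := by
      rw [Mo, ← integral_const_mul]
    rw [e1, e2]
  linarith [hsplit ▸ htot]

lemma mo_one : Mo 1 = 0 := by
  have hd : ∀ t : ℝ, HasDerivAt (fun t : ℝ => Real.exp (-t ^ 2))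
      (-2 * (t ^ 1 * Real.exp (-t ^ 2))) t := by
    intro t
    have hs : HasDerivAt (fun t : ℝ => -t ^ 2) (-(2 * t)) t := by
      simpa using ((hasDerivAt_pow 2 t).fun_neg)
    have := hs.exp
    refine this.congr_deriv ?_; ring
  have hint : Integrable (fun t : ℝ => -2 * (t ^ 1 * Real.exp (-t ^ 2))) :=
    (integrable_pow_gauss 1).const_mul _
  have h0 : Tendsto (fun t : ℝ => Real.exp (-t ^ 2)) atTop (nhds 0) := by
    have := tendsto_pow_gauss_atTop 0
    simpa using this
  have h0' : Tendsto (fun t : ℝ => Real.exp (-t ^ 2)) atBot (nhds 0) := by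
    have := tendsto_pow_gauss_atBot 0
    simpa using this
  have hIoi := integral_Ioi_of_hasDerivAt_of_tendsto' (a := (0 : ℝ))
      (fun x _ => hd x) hint.integrableOn h0
  have hIic := integral_Iic_of_hasDerivAt_of_tendsto' (a := (0 : ℝ))
      (fun x _ => hd x) hint.integrableOn h0'
  have htot : ∫ t : ℝ, -2 * (t ^ 1 * Real.exp (-t ^ 2)) = 0 := by
    rw [← intervalIntegral.integral_Iic_add_Ioi (b := (0 : ℝ)) hint.integrableOn
      hint.integrableOn, hIoi, hIic]
    ring
  rw [integral_const_mul] at htot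
  have : (∫ t : ℝ, t ^ 1 * Real.exp (-t ^ 2)) = 0 := by linarith
  simpa [Mo] using this




variable {n : ℕ}

noncomputable def gaussW (x : Fin n → ℝ) : ℝ := Real.exp (-(∑ i, x i ^ 2))

lemma gaussW_eq_prod (x : Fin n → ℝ) : gaussW x = ∏ i, Real.exp (-(x i ^ 2)) := by
  rw [gaussW, ← Real.exp_sum]
  congr 1
  simp

lemma gaussW_def (x : Fin n → ℝ) : gaussW x = Real.exp (-(∑ i, x i ^ 2)) := rfl

lemma gaussW_nonneg (x : Fin n → ℝ) : 0 ≤ gaussW x := Real.exp_nonneg _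

noncomputable def Eg (P : MvPolynomial (Fin n) ℂ) : ℂ :=
  ∫ x : Fin n → ℝ, evalR P x * (gaussW x : ℂ)

lemma monomial_term_eq (v : Fin n →₀ ℕ) (c : ℂ) (x : Fin n → ℝ) :
    evalR (monomial v c) x * (gaussW x : ℂ)
      = c * ((∏ i, (x i ^ v i * Real.exp (-(x i ^ 2))) : ℝ) : ℂ) := by
  rw [evalR, eval_monomial, gaussW_eq_prod]
  rw [Finsupp.prod_fintype _ _ (fun i => pow_zero _)]
  push_cast
  rw [Finset.prod_mul_distrib]
  ring

lemma integrable_mterm (v : Fin n →₀ ℕ) :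
    Integrable (fun x : Fin n → ℝ => ∏ i, (x i ^ v i * Real.exp (-(x i ^ 2)))) :=
  Integrable.fintype_prod (f := fun i t => t ^ v i * Real.exp (-(t ^ 2)))
    fun i => integrable_pow_gauss (v i)

lemma integrand_eq (f : MvPolynomial (Fin n) ℂ) (x : Fin n → ℝ) :
    evalR f x * (gaussW x : ℂ)
      = ∑ v ∈ f.support, coeff v f *
          ((∏ i, (x i ^ v i * Real.exp (-(x i ^ 2))) : ℝ) : ℂ) := by
  have h1 : evalR f x = ∑ v ∈ f.support, evalR (monomial v (coeff v f)) x := by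
    rw [evalR]
    conv_lhs => rw [f.as_sum]
    exact map_sum _ _ _
  rw [h1, Finset.sum_mul]
  exact Finset.sum_congr rfl fun v _ => monomial_term_eq v _ x

lemma integrable_integrand (f : MvPolynomial (Fin n) ℂ) :
    Integrable (fun x : Fin n → ℝ => evalR f x * (gaussW x : ℂ)) := by
  rw [show (fun x : Fin n → ℝ => evalR f x * (gaussW x : ℂ))
      = fun x => ∑ v ∈ f.support, coeff v f *
          ((∏ i, (x i ^ v i * Real.exp (-(x i ^ 2))) : ℝ) : ℂ) from funext (integrand_eq f)]
  exact integrable_finset_sum _ fun v _ =>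
    ((integrable_mterm v).ofReal.const_mul _)

lemma Eg_monomial (v : Fin n →₀ ℕ) (c : ℂ) :
    Eg (monomial v c) = c * ∏ i, (Mo (v i) : ℂ) := by
  rw [Eg]
  simp_rw [monomial_term_eq v c]
  rw [integral_const_mul]
  have hor := integral_ofReal (𝕜 := ℂ) (μ := (volume : Measure (Fin n → ℝ)))
    (f := fun a : Fin n → ℝ => ∏ i, (a i ^ v i * Real.exp (-(a i ^ 2))))
  have h2 : (∫ a : Fin n → ℝ, ((∏ i, (a i ^ v i * Real.exp (-(a i ^ 2))) : ℝ) : ℂ))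
      = ((∫ a : Fin n → ℝ, ∏ i, (a i ^ v i * Real.exp (-(a i ^ 2))) : ℝ) : ℂ) := hor
  rw [h2]
  congr 1
  rw [show (∫ x : Fin n → ℝ, ((∏ i, (x i ^ v i * Real.exp (-(x i ^ 2)))) : ℝ))
      = ∏ i, ∫ t : ℝ, t ^ v i * Real.exp (-(t ^ 2)) from
    MeasureTheory.integral_fintype_prod_volume_eq_prod
      (f := fun i t => t ^ v i * Real.exp (-(t ^ 2)))]
  push_cast
  rfl

lemma Eg_add (f g : MvPolynomial (Fin n) ℂ) : Eg (f + g) = Eg f + Eg g := by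
  rw [Eg, Eg, Eg, ← integral_add (integrable_integrand f) (integrable_integrand g)]
  congr 1
  funext x
  rw [show evalR (f + g) x = evalR f x + evalR g x from map_add _ _ _]
  ring

lemma Eg_sub (f g : MvPolynomial (Fin n) ℂ) : Eg (f - g) = Eg f - Eg g := by
  rw [Eg, Eg, Eg, ← integral_sub (integrable_integrand f) (integrable_integrand g)]
  congr 1
  funext x
  rw [show evalR (f - g) x = evalR f x - evalR g x from map_sub _ _ _]
  ring

/-- Key integration-by-parts identity: `∫ ∂ⱼR e^{-|x|²} = 2 ∫ xⱼ R e^{-|x|²}`. -/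
lemma Eg_pderiv (j : Fin n) (R : MvPolynomial (Fin n) ℂ) :
    Eg (pderiv j R) = Eg (X j * R) + Eg (X j * R) := by
  induction R using MvPolynomial.induction_on' with
  | add p q hp hq =>
    simp only [map_add, mul_add, Eg_add, hp, hq]
    ring
  | monomial v c =>
    rw [pderiv_monomial]
    rw [show (X j : MvPolynomial (Fin n) ℂ) * monomial v c
        = monomial (v + Finsupp.single j 1) c by
      rw [X, monomial_mul, one_mul, add_comm]]
    rw [Eg_monomial, Eg_monomial]
    rcases Nat.eq_zero_or_pos (v j) with h0 | hpos
    · rw [h0]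
      have : ((Mo ((v + Finsupp.single j 1 : Fin n →₀ ℕ) j)) : ℂ) = 0 := by
        simp [Finsupp.add_apply, Finsupp.single_apply, h0, mo_one]
      rw [show (∏ i, ((Mo ((v + Finsupp.single j 1 : Fin n →₀ ℕ) i)) : ℂ)) = 0 from
        Finset.prod_eq_zero (Finset.mem_univ j) this]
      simp
    · obtain ⟨k, hk⟩ : ∃ k, v j = k + 1 := ⟨v j - 1, by omega⟩
      have hsplit : ∀ (w : Fin n →₀ ℕ), (∏ i, ((Mo (w i)) : ℂ))
          = (Mo (w j) : ℂ) * ∏ i ∈ Finset.univ.erase j, ((Mo (w i)) : ℂ) := by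
        intro w
        rw [← Finset.mul_prod_erase Finset.univ _ (Finset.mem_univ j)]
      rw [hsplit, hsplit]
      have hsame : ∀ i ∈ Finset.univ.erase j,
          ((Mo ((v - Finsupp.single j 1 : Fin n →₀ ℕ) i)) : ℂ) = (Mo ((v + Finsupp.single j 1 : Fin n →₀ ℕ) i) : ℂ) := by
        intro i hi
        have hij : i ≠ j := Finset.ne_of_mem_erase hi
        simp [Finsupp.sub_apply, Finsupp.add_apply, Finsupp.single_apply, hij.symm]
      rw [Finset.prod_congr rfl hsame]
      have h1 : (v - Finsupp.single j 1 : Fin n →₀ ℕ) j = k := by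
        simp [Finsupp.sub_apply, hk]
      have h2 : (v + Finsupp.single j 1 : Fin n →₀ ℕ) j = k + 2 := by
        simp [Finsupp.add_apply, hk]
      rw [h1, h2, hk]
      have hrec : ((k : ℝ) + 1) * Mo k = 2 * Mo (k + 2) := mo_rec k
      have hrecC : ((k : ℂ) + 1) * (Mo k : ℂ) = 2 * (Mo (k + 2) : ℂ) := by
        exact_mod_cast congrArg (fun r : ℝ => (r : ℂ)) hrec
      simp only [Nat.cast_add, Nat.cast_one]
      linear_combination (c * ∏ i ∈ Finset.univ.erase j,
        ((Mo ((v + Finsupp.single j 1 : Fin n →₀ ℕ) i)) : ℂ)) * hrecC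

noncomputable def conjP (g : MvPolynomial (Fin n) ℂ) : MvPolynomial (Fin n) ℂ :=
  MvPolynomial.map (starRingEnd ℂ) g

lemma conj_evalR (g : MvPolynomial (Fin n) ℂ) (x : Fin n → ℝ) :
    (starRingEnd ℂ) (evalR g x) = evalR (conjP g) x := by
  rw [evalR, evalR, conjP, eval_map]
  rw [show (MvPolynomial.eval (fun i => ((x i : ℂ))) g)
      = eval₂ (RingHom.id ℂ) (fun i => (x i : ℂ)) g from rfl]
  rw [eval₂_comp_left]
  simp [Function.comp_def, Complex.conj_ofReal]

lemma integral_ofReal' (f : (Fin n → ℝ) → ℝ) :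
    ∫ x : Fin n → ℝ, ((f x : ℝ) : ℂ) = ((∫ x : Fin n → ℝ, f x : ℝ) : ℂ) :=
  integral_ofReal

lemma rFInner_eq (f g : MvPolynomial (Fin n) ℂ) : rFInner f g = Eg (f * conjP g) := by
  rw [rFInner, Eg]
  congr 1
  funext x
  rw [conj_evalR]
  rw [show evalR (f * conjP g) x = evalR f x * evalR (conjP g) x from _root_.map_mul _ _ _]
  rfl

lemma integrable_inner_integrand (f g : MvPolynomial (Fin n) ℂ) :
    Integrable (fun x : Fin n → ℝ =>
      evalR f x * (starRingEnd ℂ) (evalR g x) * ((gaussW x : ℝ) : ℂ)) := by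
  refine (integrable_integrand (f * conjP g)).congr ?_
  filter_upwards with x
  rw [conj_evalR, show evalR (f * conjP g) x = evalR f x * evalR (conjP g) x from _root_.map_mul _ _ _]

noncomputable def N2 (f : MvPolynomial (Fin n) ℂ) : ℝ :=
  ∫ x : Fin n → ℝ, ‖evalR f x‖ ^ 2 * gaussW x

lemma N2_nonneg (f : MvPolynomial (Fin n) ℂ) : 0 ≤ N2 f :=
  integral_nonneg fun x => mul_nonneg (by positivity) (gaussW_nonneg x)

lemma rFNorm_eq_sqrt (f : MvPolynomial (Fin n) ℂ) : rFNorm f = Real.sqrt (N2 f) := rfl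

lemma rFNorm_nonneg (f : MvPolynomial (Fin n) ℂ) : 0 ≤ rFNorm f := Real.sqrt_nonneg _

lemma rFNorm_sq (f : MvPolynomial (Fin n) ℂ) : rFNorm f ^ 2 = N2 f := by
  rw [rFNorm_eq_sqrt, Real.sq_sqrt (N2_nonneg f)]

lemma rFInner_self (f : MvPolynomial (Fin n) ℂ) : rFInner f f = ((N2 f : ℝ) : ℂ) := by
  rw [rFInner, N2, ← integral_ofReal']
  congr 1
  funext x
  rw [Complex.ofReal_mul]
  rw [show ((‖evalR f x‖ ^ 2 : ℝ) : ℂ) = evalR f x * (starRingEnd ℂ) (evalR f x) by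
    rw [Complex.sq_norm, ← Complex.mul_conj]]
  rfl

lemma rFInner_conj_symm (f g : MvPolynomial (Fin n) ℂ) :
    rFInner g f = (starRingEnd ℂ) (rFInner f g) := by
  rw [rFInner, rFInner, ← integral_conj]
  congr 1
  funext x
  simp only [_root_.map_mul, Complex.conj_conj, Complex.conj_ofReal]
  ring

lemma rFInner_add_left (a b c : MvPolynomial (Fin n) ℂ) :
    rFInner (a + b) c = rFInner a c + rFInner b c := by
  rw [rFInner_eq, rFInner_eq, rFInner_eq, add_mul, Eg_add]

lemma norm_inner_integrand (f g : MvPolynomial (Fin n) ℂ) (x : Fin n → ℝ) :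
    ‖evalR f x * (starRingEnd ℂ) (evalR g x) * ((gaussW x : ℝ) : ℂ)‖
      = ‖evalR f x‖ * ‖evalR g x‖ * gaussW x := by
  rw [norm_mul, norm_mul]
  simp only [Complex.norm_conj, Complex.norm_real, Real.norm_eq_abs]
  rw [abs_of_nonneg (gaussW_nonneg x)]

lemma abs_rFInner_le (f g : MvPolynomial (Fin n) ℂ) :
    ‖rFInner f g‖ ≤ rFNorm f * rFNorm g := by
  set u : (Fin n → ℝ) → ℝ := fun x => ‖evalR f x‖ with hu
  set w : (Fin n → ℝ) → ℝ := fun x => ‖evalR g x‖ with hw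
  have hBint : Integrable (fun x : Fin n → ℝ => u x * w x * gaussW x) :=
    ((integrable_inner_integrand f g).norm).congr
      (by filter_upwards with x; rw [norm_inner_integrand f g x])
  have hu2 : Integrable (fun x : Fin n → ℝ => u x ^ 2 * gaussW x) := by
    refine ((integrable_inner_integrand f f).norm).congr ?_
    filter_upwards with x
    rw [norm_inner_integrand f f x, hu]
    ring
  have hw2 : Integrable (fun x : Fin n → ℝ => w x ^ 2 * gaussW x) := by
    refine ((integrable_inner_integrand g g).norm).congr ?_
    filter_upwards with x
    rw [norm_inner_integrand g g x, hw]
    ring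
  set B : ℝ := ∫ x : Fin n → ℝ, u x * w x * gaussW x with hB
  have hBnonneg : 0 ≤ B :=
    integral_nonneg fun x => mul_nonneg (mul_nonneg (by positivity) (by positivity))
      (gaussW_nonneg x)
  have hstep1 : ‖rFInner f g‖ ≤ B := by
    rw [show ‖rFInner f g‖ = ‖rFInner f g‖ from rfl, rFInner, hB]
    refine (norm_integral_le_integral_norm _).trans (le_of_eq ?_)
    congr 1
    funext x
    exact norm_inner_integrand f g x
  have hN2f : N2 f = ∫ x : Fin n → ℝ, u x ^ 2 * gaussW x := rfl
  have hN2g : N2 g = ∫ x : Fin n → ℝ, w x ^ 2 * gaussW x := rfl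
  have hquad : ∀ t : ℝ, 0 ≤ N2 f * (t * t) + (-2 * B) * t + N2 g := by
    intro t
    have hpt : ∀ x : Fin n → ℝ, (t * u x - w x) ^ 2 * gaussW x
        = t * t * (u x ^ 2 * gaussW x) - 2 * t * (u x * w x * gaussW x)
          + w x ^ 2 * gaussW x := by
      intro x; ring
    have hnn : 0 ≤ ∫ x : Fin n → ℝ, (t * u x - w x) ^ 2 * gaussW x :=
      integral_nonneg fun x => mul_nonneg (sq_nonneg _) (gaussW_nonneg x)
    have hval : (∫ x : Fin n → ℝ, (t * u x - w x) ^ 2 * gaussW x)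
        = t * t * N2 f - 2 * t * B + N2 g := by
      simp_rw [hpt]
      have i1 : Integrable (fun x : Fin n → ℝ =>
          t * t * (u x ^ 2 * gaussW x) - 2 * t * (u x * w x * gaussW x)) :=
        (hu2.const_mul (t * t)).sub (hBint.const_mul (2 * t))
      rw [integral_add i1 hw2, integral_sub (hu2.const_mul (t * t)) (hBint.const_mul (2 * t)),
        integral_const_mul, integral_const_mul, hN2f, hN2g, hB]
    rw [hval] at hnn
    linarith
  have hdisc := discrim_le_zero hquad
  rw [discrim] at hdisc
  have hfin : B ≤ rFNorm f * rFNorm g := by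
    have h1 : rFNorm f * rFNorm g = Real.sqrt (N2 f * N2 g) := by
      rw [rFNorm_eq_sqrt, rFNorm_eq_sqrt, ← Real.sqrt_mul (N2_nonneg f)]
    rw [h1]
    exact (Real.le_sqrt hBnonneg (mul_nonneg (N2_nonneg f) (N2_nonneg g))).mpr (by nlinarith)
  linarith

noncomputable def astar (j : Fin n) (v : MvPolynomial (Fin n) ℂ) : MvPolynomial (Fin n) ℂ :=
  X j * v + X j * v - pderiv j v

lemma conjP_astar (j : Fin n) (v : MvPolynomial (Fin n) ℂ) :
    conjP (astar j v) = astar j (conjP v) := by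
  simp only [astar, conjP, map_sub, map_add, _root_.map_mul, map_X, pderiv_map]

lemma adjoint (j : Fin n) (u v : MvPolynomial (Fin n) ℂ) :
    rFInner (pderiv j u) v = rFInner u (astar j v) := by
  rw [rFInner_eq, rFInner_eq, conjP_astar, astar]
  set v' := conjP v
  have hkey := Eg_pderiv j (u * v')
  rw [pderiv_mul, Eg_add] at hkey
  have e1 : u * (X j * v' + X j * v' - pderiv j v')
      = X j * (u * v') + X j * (u * v') - u * pderiv j v' := by ring
  rw [e1, Eg_sub, Eg_add]
  linear_combination hkey

lemma comm_ident (j : Fin n) (v : MvPolynomial (Fin n) ℂ) :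
    pderiv j (astar j v) = astar j (pderiv j v) + v + v := by
  simp only [astar, map_sub, map_add, pderiv_mul, pderiv_X_self]
  ring

lemma inner_astar_self (j : Fin n) (v : MvPolynomial (Fin n) ℂ) :
    rFInner (astar j v) (astar j v)
      = rFInner (pderiv j v) (pderiv j v) + rFInner v v + rFInner v v := by
  have h1 : rFInner (astar j v) (astar j v) = rFInner (pderiv j (astar j v)) v :=
    (adjoint j (astar j v) v).symm
  rw [h1, comm_ident, rFInner_add_left, rFInner_add_left]
  have h2 : rFInner (astar j (pderiv j v)) v
      = rFInner (pderiv j v) (pderiv j v) := by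
    rw [rFInner_conj_symm, ← adjoint j v (pderiv j v), rFInner_self, Complex.conj_ofReal]
  rw [h2]

lemma finsupp_sum_eq (v : Fin n →₀ ℕ) : (v.sum fun _ e => e) = ∑ i, v i :=
  Finsupp.sum_fintype _ _ fun _ => rfl

lemma deg_pderiv (j : Fin n) (m : ℕ) (f : MvPolynomial (Fin n) ℂ)
    (hf : f.totalDegree ≤ m + 1) : (pderiv j f).totalDegree ≤ m := by
  conv_lhs => rw [f.as_sum]
  rw [map_sum]
  refine (totalDegree_finset_sum _ _).trans (Finset.sup_le fun v hv => ?_)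
  rw [pderiv_monomial]
  rcases Nat.eq_zero_or_pos (v j) with h0 | hpos
  · rw [h0]
    simp
  · refine (totalDegree_monomial_le _ _).trans ?_
    have hvm : ∑ i, v i ≤ m + 1 := by
      rw [← finsupp_sum_eq]
      exact (le_totalDegree hv).trans hf
    have hsplit : ∀ w : Fin n →₀ ℕ, ∑ i, w i = w j + ∑ i ∈ Finset.univ.erase j, w i := by
      intro w
      rw [Finset.add_sum_erase _ _ (Finset.mem_univ j)]
    have hsame : ∑ i ∈ Finset.univ.erase j, (v - Finsupp.single j 1 : Fin n →₀ ℕ) i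
        = ∑ i ∈ Finset.univ.erase j, v i := by
      refine Finset.sum_congr rfl fun i hi => ?_
      have hij : i ≠ j := Finset.ne_of_mem_erase hi
      simp [Finsupp.sub_apply, Finsupp.single_apply, hij.symm]
    have hj : (v - Finsupp.single j 1 : Fin n →₀ ℕ) j = v j - 1 := by
      simp [Finsupp.sub_apply]
    have hgoal : ∑ i, (v - Finsupp.single j 1 : Fin n →₀ ℕ) i ≤ m := by
      rw [hsplit (v - Finsupp.single j 1), hsame, hj]
      rw [hsplit v] at hvm
      omega
    exact le_trans (le_of_eq (finsupp_sum_eq _)) hgoal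

lemma deg_pderiv_le (j : Fin n) (f : MvPolynomial (Fin n) ℂ) :
    (pderiv j f).totalDegree ≤ f.totalDegree := by
  rcases Nat.eq_zero_or_pos f.totalDegree with h0 | hpos
  · exact (deg_pderiv j 0 f (by omega)).trans (by omega)
  · exact (deg_pderiv j (f.totalDegree - 1) f (by omega)).trans (by omega)

lemma rFNorm_zero : rFNorm (0 : MvPolynomial (Fin n) ℂ) = 0 := by
  rw [rFNorm_eq_sqrt]
  have : N2 (0 : MvPolynomial (Fin n) ℂ) = 0 := by
    rw [N2]
    have : ∀ x : Fin n → ℝ, ‖evalR (0 : MvPolynomial (Fin n) ℂ) x‖ ^ 2 * gaussW x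
        = 0 := by
      intro x
      rw [show evalR (0 : MvPolynomial (Fin n) ℂ) x = 0 from map_zero _]
      simp
    simp_rw [this]
    exact integral_zero _ _
  rw [this, Real.sqrt_zero]

lemma step_bound (j : Fin n) : ∀ (m : ℕ) (f : MvPolynomial (Fin n) ℂ), f.totalDegree ≤ m →
    rFNorm (pderiv j f) ≤ Real.sqrt (2 * m) * rFNorm f := by
  intro m
  induction m with
  | zero =>
    intro f hf
    have hdeg0 : f.totalDegree = 0 := Nat.le_zero.mp hf
    have hz : pderiv j f = 0 := by
      conv_lhs => rw [f.as_sum]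
      rw [map_sum]
      refine Finset.sum_eq_zero fun v hv => ?_
      rw [pderiv_monomial]
      have hvj : v j = 0 := (totalDegree_eq_zero_iff (Fin n) f).mp hdeg0 v hv j
      rw [hvj]
      simp
    rw [hz, rFNorm_zero]
    exact mul_nonneg (Real.sqrt_nonneg _) (rFNorm_nonneg f)
  | succ m ih =>
    intro f hf
    set q := pderiv j f with hq
    have hqdeg : q.totalDegree ≤ m := deg_pderiv j m f hf
    -- ‖a* q‖² ≤ 2(m+1) ‖q‖²
    have hIH : rFNorm (pderiv j q) ≤ Real.sqrt (2 * m) * rFNorm q := ih q hqdeg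
    have hIH2 : N2 (pderiv j q) ≤ 2 * m * N2 q := by
      have h1 : rFNorm (pderiv j q) ^ 2 ≤ (Real.sqrt (2 * m) * rFNorm q) ^ 2 := by
        have := rFNorm_nonneg (pderiv j q)
        nlinarith [rFNorm_nonneg q, Real.sqrt_nonneg (2 * (m : ℝ))]
      rw [rFNorm_sq] at h1
      calc N2 (pderiv j q) ≤ (Real.sqrt (2 * m) * rFNorm q) ^ 2 := h1
        _ = (Real.sqrt (2 * m)) ^ 2 * rFNorm q ^ 2 := by ring
        _ = 2 * m * N2 q := by
            rw [Real.sq_sqrt (by positivity : (0 : ℝ) ≤ 2 * (m : ℝ)), rFNorm_sq]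
    have hastar : N2 (astar j q) = N2 (pderiv j q) + N2 q + N2 q := by
      have h := inner_astar_self j q
      rw [rFInner_self, rFInner_self, rFInner_self] at h
      have := congrArg Complex.re h
      simpa using this
    have hastar_le : N2 (astar j q) ≤ 2 * (m + 1) * N2 q := by
      rw [hastar]; linarith
    -- ‖q‖² = Re ⟨f, a* q⟩ ≤ ‖f‖ ‖a* q‖
    have hq2 : N2 q = (rFInner f (astar j q)).re := by
      rw [← adjoint j f q, ← hq, rFInner_self]
      simp
    have habs : (rFInner f (astar j q)).re ≤ rFNorm f * rFNorm (astar j q) := by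
      refine (Complex.re_le_norm _).trans (abs_rFInner_le f (astar j q))
    have hna : rFNorm (astar j q) ≤ Real.sqrt (2 * (m + 1)) * rFNorm q := by
      rw [rFNorm_eq_sqrt, rFNorm_eq_sqrt]
      calc Real.sqrt (N2 (astar j q)) ≤ Real.sqrt (2 * (m + 1) * N2 q) :=
            Real.sqrt_le_sqrt hastar_le
        _ = Real.sqrt (2 * (m + 1)) * Real.sqrt (N2 q) :=
            Real.sqrt_mul (by positivity) _
    have hfinal : N2 q ≤ Real.sqrt (2 * (m + 1)) * rFNorm f * rFNorm q := by
      calc N2 q = (rFInner f (astar j q)).re := hq2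
        _ ≤ rFNorm f * rFNorm (astar j q) := habs
        _ ≤ rFNorm f * (Real.sqrt (2 * (m + 1)) * rFNorm q) := by
            exact mul_le_mul_of_nonneg_left hna (rFNorm_nonneg f)
        _ = Real.sqrt (2 * (m + 1)) * rFNorm f * rFNorm q := by ring
    have hcast : ((m : ℝ) + 1) = ((m + 1 : ℕ) : ℝ) := by push_cast; ring
    rcases eq_or_lt_of_le (rFNorm_nonneg q) with h0 | hpos
    · rw [← h0]
      rw [← hcast]
      exact mul_nonneg (Real.sqrt_nonneg _) (rFNorm_nonneg f)
    · have hsq : rFNorm q ^ 2 = N2 q := rFNorm_sq q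
      rw [← hcast]
      nlinarith [hfinal, hpos]

lemma iter_bound (j : Fin n) (m : ℕ) : ∀ (k : ℕ) (f : MvPolynomial (Fin n) ℂ),
    f.totalDegree ≤ m →
    ((fun h => pderiv j h)^[k] f).totalDegree ≤ m ∧
    rFNorm ((fun h => pderiv j h)^[k] f) ≤ Real.sqrt (2 * m) ^ k * rFNorm f := by
  intro k
  induction k with
  | zero => intro f hf; simpa using hf
  | succ k ih =>
    intro f hf
    obtain ⟨hdeg, hbound⟩ := ih f hf
    rw [Function.iterate_succ_apply']
    constructor
    · exact (deg_pderiv_le j _).trans hdeg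
    · calc rFNorm (pderiv j ((fun h => pderiv j h)^[k] f))
          ≤ Real.sqrt (2 * m) * rFNorm ((fun h => pderiv j h)^[k] f) :=
            step_bound j m _ hdeg
        _ ≤ Real.sqrt (2 * m) * (Real.sqrt (2 * m) ^ k * rFNorm f) :=
            mul_le_mul_of_nonneg_left hbound (Real.sqrt_nonneg _)
        _ = Real.sqrt (2 * m) ^ (k + 1) * rFNorm f := by ring

lemma sqrt_pow' (a : ℝ) (ha : 0 ≤ a) (k : ℕ) : Real.sqrt (a ^ k) = Real.sqrt a ^ k := by
  induction k with
  | zero => simp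
  | succ k ih => rw [pow_succ, pow_succ, Real.sqrt_mul (pow_nonneg ha k), ih]

lemma foldl_bound (m : ℕ) (α : Fin n → ℕ) : ∀ (l : List (Fin n)) (f : MvPolynomial (Fin n) ℂ),
    f.totalDegree ≤ m →
    (l.foldl (fun g i => (fun h => pderiv i h)^[α i] g) f).totalDegree ≤ m ∧
    rFNorm (l.foldl (fun g i => (fun h => pderiv i h)^[α i] g) f)
      ≤ Real.sqrt (2 * m) ^ (l.map α).sum * rFNorm f := by
  intro l
  induction l with
  | nil => intro f hf; simpa using hf
  | cons i l ih =>
    intro f hf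
    obtain ⟨hdeg, hbound⟩ := iter_bound i m (α i) f hf
    obtain ⟨hdeg2, hbound2⟩ := ih ((fun h => pderiv i h)^[α i] f) hdeg
    rw [List.foldl_cons]
    refine ⟨hdeg2, ?_⟩
    rw [List.map_cons, List.sum_cons]
    calc rFNorm (l.foldl (fun g i => (fun h => pderiv i h)^[α i] g)
            ((fun h => pderiv i h)^[α i] f))
        ≤ Real.sqrt (2 * m) ^ (l.map α).sum * rFNorm ((fun h => pderiv i h)^[α i] f) :=
          hbound2
      _ ≤ Real.sqrt (2 * m) ^ (l.map α).sum * (Real.sqrt (2 * m) ^ (α i) * rFNorm f) :=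
          mul_le_mul_of_nonneg_left hbound (pow_nonneg (Real.sqrt_nonneg _) _)
      _ = Real.sqrt (2 * m) ^ (α i + (l.map α).sum) * rFNorm f := by
          rw [pow_add]; ring

end Stmt9Aux
end

/-- Proposition `PropDeriv`, real Fischer norm:
`‖D^α f_m‖_rF ≤ √((2m)^{|α|}) ‖f_m‖_rF` for homogeneous `f_m` of degree `m`. -/
theorem stmt_9 (n m : ℕ) (α : Fin n → ℕ) (f : MvPolynomial (Fin n) ℂ)
    (hf : f.IsHomogeneous m) :
    rFNorm (DP α f) ≤ Real.sqrt ((2 * (m : ℝ)) ^ (∑ i, α i)) * rFNorm f := by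
  have hdeg : f.totalDegree ≤ m := hf.totalDegree_le
  have h := (Stmt9Aux.foldl_bound m α (List.finRange n) f hdeg).2
  have hsum : ((List.finRange n).map α).sum = ∑ i, α i := (Fin.sum_univ_def α).symm
  rw [Stmt9Aux.sqrt_pow' _ (by positivity)]
  rw [show DP α f
      = (List.finRange n).foldl (fun g i => (fun h => MvPolynomial.pderiv i h)^[α i] g) f
    from rfl]
  rw [← hsum]
  exact h
end

section
/- Let p ≥ 1 and m ≥ 0 be integers and let F_{2p} be the linear operator on the space P_m(ℝ^n) of homogeneous polynomials of degree m in n variables with complex coefficients defined by F_{2p}(q) := Δ^p(|x|^{2p} q). Then P_m(ℝ^n) has a basis consisting of eigenvectors of F_{2p}, all of whose eigenvalues are real and greater than or equal to e_{p,m}. -/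
open MvPolynomial MeasureTheory Filter Matrix

namespace Fischer
variable {n : ℕ}
abbrev Pn (n : ℕ) := MvPolynomial (Fin n) ℂ

def w (α : Fin n →₀ ℕ) : ℂ := ∏ i, ((α i).factorial : ℂ)

lemma FInner_eq_sum (f g : Pn n) (S : Finset (Fin n →₀ ℕ))
    (hS : f.support ∩ g.support ⊆ S) :
    FInner f g = ∑ α ∈ S, w α * coeff α f * (starRingEnd ℂ) (coeff α g) := by
  have van : ∀ α, α ∉ f.support ∩ g.support →
      w α * coeff α f * (starRingEnd ℂ) (coeff α g) = 0 := by
    intro α h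
    rw [Finset.mem_inter, not_and_or] at h
    rcases h with h | h <;> simp only [mem_support_iff, not_not] at h <;> simp [h]
  have h1 : ∑ α ∈ f.support ∪ g.support, w α * coeff α f * (starRingEnd ℂ) (coeff α g)
      = ∑ α ∈ f.support ∩ g.support, w α * coeff α f * (starRingEnd ℂ) (coeff α g) :=
    (Finset.sum_subset Finset.inter_subset_union (fun x _ hx => van x hx)).symm
  have h2 : ∑ α ∈ S, w α * coeff α f * (starRingEnd ℂ) (coeff α g)
      = ∑ α ∈ f.support ∩ g.support, w α * coeff α f * (starRingEnd ℂ) (coeff α g) :=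
    (Finset.sum_subset hS (fun x _ hx => van x hx)).symm
  simp only [w] at h1 h2 ⊢
  rw [FInner, h1, h2]

lemma FInner_add_left (f f' g : Pn n) : FInner (f + f') g = FInner f g + FInner f' g := by
  set S := (f.support ∪ f'.support) ∪ g.support with hSdef
  have hg : ∀ h : Pn n, h.support ⊆ f.support ∪ f'.support → h.support ∩ g.support ⊆ S :=
    fun h hh => Finset.inter_subset_left.trans (hh.trans Finset.subset_union_left)
  rw [FInner_eq_sum (f + f') g S (hg _ (Finsupp.support_add)),
    FInner_eq_sum f g S (hg _ Finset.subset_union_left),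
    FInner_eq_sum f' g S (hg _ Finset.subset_union_right), ← Finset.sum_add_distrib]
  refine Finset.sum_congr rfl fun α _ => ?_
  rw [coeff_add]; ring

lemma FInner_smul_left (c : ℂ) (f g : Pn n) : FInner (c • f) g = c * FInner f g := by
  have h1 : (c • f).support ∩ g.support ⊆ f.support ∪ g.support :=
    Finset.inter_subset_left.trans ((Finsupp.support_smul).trans Finset.subset_union_left)
  rw [FInner_eq_sum (c • f) g _ h1,
    FInner_eq_sum f g (f.support ∪ g.support)
      (Finset.inter_subset_left.trans Finset.subset_union_left), Finset.mul_sum]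
  refine Finset.sum_congr rfl fun α _ => ?_
  rw [MvPolynomial.coeff_smul]; simp; ring

lemma FInner_conj (f g : Pn n) : (starRingEnd ℂ) (FInner f g) = FInner g f := by
  rw [FInner_eq_sum f g (f.support ∪ g.support)
      (Finset.inter_subset_left.trans Finset.subset_union_left),
    FInner_eq_sum g f (f.support ∪ g.support)
      (Finset.inter_subset_right.trans Finset.subset_union_left), map_sum]
  refine Finset.sum_congr rfl fun α _ => ?_
  simp only [w, _root_.map_mul, map_prod, map_natCast, Complex.conj_conj]
  ring

lemma FInner_zero_left (g : Pn n) : FInner (0 : Pn n) g = 0 := by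
  rw [FInner_eq_sum 0 g ∅ (by simp), Finset.sum_empty]

lemma FInner_sum_left {ι : Type*} (s : Finset ι) (f : ι → Pn n) (g : Pn n) :
    FInner (∑ i ∈ s, f i) g = ∑ i ∈ s, FInner (f i) g :=
  map_sum (AddMonoidHom.mk' (fun h => FInner h g) (fun a b => FInner_add_left a b g)) f s

lemma FInner_add_right (f g g' : Pn n) : FInner f (g + g') = FInner f g + FInner f g' := by
  rw [← FInner_conj, FInner_add_left, map_add, FInner_conj, FInner_conj]

lemma FInner_smul_right (c : ℂ) (f g : Pn n) :
    FInner f (c • g) = (starRingEnd ℂ) c * FInner f g := by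
  rw [← FInner_conj, FInner_smul_left, _root_.map_mul, FInner_conj]

lemma FInner_zero_right (f : Pn n) : FInner f (0 : Pn n) = 0 := by
  rw [← FInner_conj, FInner_zero_left, map_zero]

lemma FInner_sum_right {ι : Type*} (s : Finset ι) (f : Pn n) (g : ι → Pn n) :
    FInner f (∑ i ∈ s, g i) = ∑ i ∈ s, FInner f (g i) := by
  rw [← FInner_conj, FInner_sum_left, map_sum]
  exact Finset.sum_congr rfl fun i _ => FInner_conj _ _

lemma FInner_self_eq (f : Pn n) :
    FInner f f =
      ((∑ α ∈ f.support, (∏ i, ((α i).factorial : ℝ)) * Complex.normSq (coeff α f) : ℝ) : ℂ) := by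
  rw [FInner_eq_sum f f f.support Finset.inter_subset_left]
  have hterm : ∀ α ∈ f.support, w α * coeff α f * (starRingEnd ℂ) (coeff α f) =
      (((∏ i, ((α i).factorial : ℝ)) * Complex.normSq (coeff α f) : ℝ) : ℂ) := by
    intro α _
    rw [mul_assoc, Complex.mul_conj, w]
    push_cast
    ring
  rw [Finset.sum_congr rfl hterm, ← Complex.ofReal_sum]

lemma FInner_self_re_nonneg (f : Pn n) : 0 ≤ (FInner f f).re := by
  rw [FInner_self_eq, Complex.ofReal_re]
  refine Finset.sum_nonneg fun α _ => mul_nonneg (Finset.prod_nonneg fun i _ => (α i).factorial.cast_nonneg)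
    (Complex.normSq_nonneg _)

lemma FInner_self_eq_re (f : Pn n) : FInner f f = ((FInner f f).re : ℂ) := by
  rw [FInner_self_eq f, Complex.ofReal_re]

lemma FInner_self_eq_zero {f : Pn n} (h : FInner f f = 0) : f = 0 := by
  rw [FInner_self_eq, Complex.ofReal_eq_zero] at h
  have hz : ∀ α ∈ f.support, (∏ i, ((α i).factorial : ℝ)) * Complex.normSq (coeff α f) = 0 := by
    exact (Finset.sum_eq_zero_iff_of_nonneg (fun α _ =>
      mul_nonneg (Finset.prod_nonneg fun i _ => (α i).factorial.cast_nonneg)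
        (Complex.normSq_nonneg _))).1 h
  ext α
  simp only [coeff_zero]
  by_contra hc
  have hα : α ∈ f.support := mem_support_iff.2 hc
  have hpos : (0:ℝ) < ∏ i, ((α i).factorial : ℝ) :=
    Finset.prod_pos fun i _ => by exact_mod_cast (α i).factorial_pos
  have := hz α hα
  rw [mul_eq_zero] at this
  rcases this with h | h
  · exact absurd h hpos.ne'
  · exact hc (Complex.normSq_eq_zero.1 h)

lemma coeff_pderiv (i : Fin n) (f : Pn n) (α : Fin n →₀ ℕ) :
    coeff α (pderiv i f) = (α i + 1 : ℂ) * coeff (α + Finsupp.single i 1) f := by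
  induction f using MvPolynomial.induction_on' with
  | monomial β c =>
    rw [pderiv_monomial]
    rcases Nat.eq_zero_or_pos (β i) with h | h
    · have hne : β ≠ α + Finsupp.single i 1 := by
        intro he; rw [he] at h; simp at h
      simp [coeff_monomial, hne, h]
    · have key : (β - Finsupp.single i 1 = α) ↔ (β = α + Finsupp.single i 1) := by
        constructor
        · intro he; rw [← he]; ext j
          by_cases hj : j = i
          · subst hj; simp [h]; omega
          · simp [Finsupp.single_apply, hj, Ne.symm hj]
        · intro he; rw [he]; ext j
          by_cases hj : j = i
          · subst hj; simp
          · simp [Finsupp.single_apply, hj, Ne.symm hj]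
      rw [coeff_monomial, coeff_monomial]
      by_cases he : β = α + Finsupp.single i 1
      · have h1 : β - Finsupp.single i 1 = α := key.2 he
        have h2 : β i = α i + 1 := by rw [he]; simp
        simp [h1, he, h2]; ring
      · have h1 : ¬ (β - Finsupp.single i 1 = α) := fun hc => he (key.1 hc)
        simp [h1, he]
  | add f g hf hg => simp [hf, hg]; ring

lemma w_add_single (α : Fin n →₀ ℕ) (i : Fin n) :
    w (α + Finsupp.single i 1) = ((α i : ℂ) + 1) * w α := by
  unfold w
  rw [← Finset.prod_erase_mul Finset.univ _ (Finset.mem_univ i),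
      ← Finset.prod_erase_mul Finset.univ (fun j => (((α j).factorial : ℕ) : ℂ)) (Finset.mem_univ i)]
  have h1 : ∀ j ∈ Finset.univ.erase i, ((((α + Finsupp.single i 1 : Fin n →₀ ℕ) j).factorial : ℕ) : ℂ)
      = (((α j).factorial : ℕ) : ℂ) := by
    intro j hj
    have hne : j ≠ i := Finset.ne_of_mem_erase hj
    simp [Finsupp.single_apply, Ne.symm hne]
  rw [Finset.prod_congr rfl h1]
  have h2 : (α + Finsupp.single i 1 : Fin n →₀ ℕ) i = α i + 1 := by simp
  rw [h2, Nat.factorial_succ]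
  push_cast
  ring

lemma FInner_pderiv_left (i : Fin n) (f g : Pn n) :
    FInner (pderiv i f) g = FInner f (MvPolynomial.X i * g) := by
  classical
  have hsub : f.support ∩ (MvPolynomial.X i * g).support ⊆
      g.support.image (· + Finsupp.single i 1) := by
    intro β hβ
    have hβ2 := Finset.mem_of_mem_inter_right hβ
    rw [support_X_mul, Finset.mem_map] at hβ2
    obtain ⟨α, hα, hβα⟩ := hβ2
    rw [Finset.mem_image]
    exact ⟨α, hα, by rw [← hβα, addLeftEmbedding_apply, add_comm]⟩
  rw [FInner_eq_sum (pderiv i f) g g.support Finset.inter_subset_right,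
      FInner_eq_sum f (MvPolynomial.X i * g) _ hsub,
      Finset.sum_image (fun x _ y _ h => add_left_injective _ h)]
  refine Finset.sum_congr rfl fun α hα => ?_
  have hc : coeff (α + Finsupp.single i 1) (MvPolynomial.X i * g) = coeff α g := by
    rw [add_comm, coeff_X_mul]
  rw [hc, w_add_single, coeff_pderiv]
  ring

lemma FInner_X_mul_left (i : Fin n) (f g : Pn n) :
    FInner (MvPolynomial.X i * f) g = FInner f (pderiv i g) := by
  rw [← FInner_conj (pderiv i g) f, FInner_pderiv_left]
  exact (FInner_conj _ _).symm

lemma FInner_lapP_left (f g : Pn n) : FInner (lapP f) g = FInner f (radSq n * g) := by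
  rw [lapP, FInner_sum_left, radSq, Finset.sum_mul, FInner_sum_right]
  refine Finset.sum_congr rfl fun i _ => ?_
  rw [FInner_pderiv_left, FInner_pderiv_left]
  congr 1
  ring

lemma FInner_radSq_mul_left (f g : Pn n) : FInner (radSq n * f) g = FInner f (lapP g) := by
  rw [← FInner_conj (lapP g) f, FInner_lapP_left]
  exact (FInner_conj _ _).symm

lemma FInner_lapP_iter_left (p : ℕ) (f g : Pn n) :
    FInner (lapP^[p] f) g = FInner f (radSq n ^ p * g) := by
  induction p generalizing f g with
  | zero => simp
  | succ p ih =>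
    rw [Function.iterate_succ_apply, ih (lapP f) g, FInner_lapP_left]
    congr 1
    ring

lemma FInner_radSq_pow_mul_left (p : ℕ) (f g : Pn n) :
    FInner (radSq n ^ p * f) g = FInner f (lapP^[p] g) := by
  rw [← FInner_conj (lapP^[p] g) f, FInner_lapP_iter_left]
  exact (FInner_conj _ _).symm

lemma lapP_add (f g : Pn n) : lapP (f + g) = lapP f + lapP g := by
  simp [lapP, map_add, Finset.sum_add_distrib]

lemma lapP_smul (c : ℂ) (f : Pn n) : lapP (c • f) = c • lapP f := by
  simp [lapP, Finset.smul_sum]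

lemma lapP_iter_add (j : ℕ) (f g : Pn n) :
    lapP^[j] (f + g) = lapP^[j] f + lapP^[j] g := by
  induction j generalizing f g with
  | zero => simp
  | succ j ih => rw [Function.iterate_succ_apply, Function.iterate_succ_apply,
      Function.iterate_succ_apply, lapP_add, ih]

lemma lapP_iter_smul (j : ℕ) (c : ℂ) (f : Pn n) :
    lapP^[j] (c • f) = c • lapP^[j] f := by
  induction j generalizing f with
  | zero => simp
  | succ j ih => rw [Function.iterate_succ_apply, Function.iterate_succ_apply,
      lapP_smul, ih]

lemma weight_one_single (i : Fin n) :
    (Finsupp.weight (1 : Fin n → ℕ)) (Finsupp.single i 1) = 1 := by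
  simp [Finsupp.weight_apply, Finsupp.sum_single_index]

lemma isHomogeneous_pderiv {f : Pn n} {m : ℕ} (hf : f.IsHomogeneous m) (i : Fin n) :
    (pderiv i f).IsHomogeneous (m - 1) := by
  intro d hd
  rw [coeff_pderiv] at hd
  have h2 : coeff (d + Finsupp.single i 1) f ≠ 0 := by
    intro h0; rw [h0, mul_zero] at hd; exact hd rfl
  have h3 := hf h2
  rw [map_add, weight_one_single] at h3
  omega

lemma isHomogeneous_lapP {f : Pn n} {m : ℕ} (hf : f.IsHomogeneous m) :
    (lapP f).IsHomogeneous (m - 2) := by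
  have h21 : m - 2 = m - 1 - 1 := by omega
  rw [lapP, h21]
  exact MvPolynomial.IsHomogeneous.sum _ _ _ fun i _ =>
    isHomogeneous_pderiv (isHomogeneous_pderiv hf i) i

lemma isHomogeneous_lapP_iter {f : Pn n} {m : ℕ} (hf : f.IsHomogeneous m) (j : ℕ) :
    (lapP^[j] f).IsHomogeneous (m - 2 * j) := by
  induction j generalizing f m with
  | zero => simpa using hf
  | succ j ih =>
    rw [Function.iterate_succ_apply]
    have h : m - 2 * (j + 1) = (m - 2) - 2 * j := by omega
    rw [h]
    exact ih (isHomogeneous_lapP hf)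

lemma isHomogeneous_radSq : (radSq n).IsHomogeneous 2 := by
  rw [radSq]
  exact MvPolynomial.IsHomogeneous.sum _ _ _ fun i _ => MvPolynomial.isHomogeneous_X_pow i 2

lemma isHomogeneous_radSq_pow (s : ℕ) : (radSq n ^ s).IsHomogeneous (2 * s) :=
  isHomogeneous_radSq.pow s

lemma degree_eq_sum_univ (α : Fin n →₀ ℕ) : Finsupp.degree α = ∑ i, α i := by
  rw [Finsupp.degree]
  exact Finset.sum_subset (Finset.subset_univ _) (by
    intro x _ hx
    simpa using (Finsupp.notMem_support_iff).1 hx)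

lemma euler {f : Pn n} {m : ℕ} (hf : f.IsHomogeneous m) :
    ∑ i, MvPolynomial.X i * pderiv i f = (m : ℂ) • f := by
  have hmono : ∀ (α : Fin n →₀ ℕ) (c : ℂ), Finsupp.degree α = m →
      ∑ i, MvPolynomial.X i * pderiv i (monomial α c) = (m : ℂ) • monomial α c := by
    intro α c hα
    have hterm : ∀ i : Fin n,
        MvPolynomial.X i * pderiv i (monomial α c) = monomial α (c * α i) := by
      intro i
      rw [pderiv_monomial]
      rcases Nat.eq_zero_or_pos (α i) with h | h
      · simp [h]
      · rw [MvPolynomial.X, monomial_mul, one_mul]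
        have hβ : Finsupp.single i 1 + (α - Finsupp.single i 1) = α := by
          ext j
          by_cases hj : j = i
          · subst hj; simp; omega
          · simp [Finsupp.single_apply, hj, Ne.symm hj]
        rw [hβ]
    rw [Finset.sum_congr rfl fun i _ => hterm i,
      ← map_sum (monomial α) (fun i => c * (α i : ℂ)) Finset.univ, ← Finset.mul_sum,
      MvPolynomial.smul_monomial]
    congr 1
    have hsum : ∑ i, ((α i : ℕ) : ℂ) = (m : ℂ) := by
      rw [← Nat.cast_sum, ← degree_eq_sum_univ, hα]
    rw [hsum, smul_eq_mul, mul_comm]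
  conv_lhs => rw [← support_sum_monomial_coeff f]
  have hps : ∀ i : Fin n, pderiv i (∑ v ∈ f.support, monomial v (coeff v f))
      = ∑ v ∈ f.support, pderiv i (monomial v (coeff v f)) := fun i => map_sum _ _ _
  simp_rw [hps, Finset.mul_sum]
  rw [Finset.sum_comm]
  have hv : ∀ v ∈ f.support, ∑ i, MvPolynomial.X i * pderiv i (monomial v (coeff v f))
      = (m : ℂ) • monomial v (coeff v f) := fun v hvv => hmono v _ (by
        rw [Finsupp.degree_eq_weight_one]; exact hf (mem_support_iff.1 hvv))
  rw [Finset.sum_congr rfl hv, ← Finset.smul_sum, support_sum_monomial_coeff]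

lemma pderiv_radSq (j : Fin n) : pderiv j (radSq n) = C (2 : ℂ) * MvPolynomial.X j := by
  rw [radSq, map_sum]
  rw [Finset.sum_eq_single j]
  · rw [sq, pderiv_mul, pderiv_X_self, mul_one, one_mul, map_ofNat, two_mul]
  · intro i _ hne
    rw [sq, pderiv_mul, pderiv_X_of_ne hne, mul_zero, zero_mul, add_zero]
  · intro h; exact absurd (Finset.mem_univ j) h

lemma lapP_mul (f g : Pn n) :
    lapP (f * g) = lapP f * g + C (2:ℂ) * (∑ i, pderiv i f * pderiv i g) + f * lapP g := by
  have h : ∀ i : Fin n, pderiv i (pderiv i (f * g)) =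
      pderiv i (pderiv i f) * g + C (2:ℂ) * (pderiv i f * pderiv i g)
        + f * pderiv i (pderiv i g) := by
    intro i
    rw [pderiv_mul, map_add, pderiv_mul, pderiv_mul]
    rw [C_mul', two_smul]
    ring
  rw [lapP, Finset.sum_congr rfl fun i _ => h i, Finset.sum_add_distrib,
    Finset.sum_add_distrib, lapP, lapP, ← Finset.sum_mul, ← Finset.mul_sum, ← Finset.mul_sum]

lemma lapP_radSq : lapP (radSq n) = C (((2 * n : ℕ) : ℂ)) := by
  have h1 : ∀ i : Fin n, pderiv i (pderiv i (radSq n)) = C (2 : ℂ) := by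
    intro i
    rw [pderiv_radSq, pderiv_C_mul, pderiv_X_self, mul_one]
  rw [lapP, Finset.sum_congr rfl fun i _ => h1 i, Finset.sum_const, Finset.card_univ,
    Fintype.card_fin, ← map_nsmul]
  congr 1
  push_cast
  ring

lemma lapP_radSq_mul {q : Pn n} {m : ℕ} (hq : q.IsHomogeneous m) :
    lapP (radSq n * q) = radSq n * lapP q + ((2 * (2 * m + n) : ℕ) : ℂ) • q := by
  rw [lapP_mul, lapP_radSq]
  have h2 : ∑ i, pderiv i (radSq n) * pderiv i q = C (2 : ℂ) * ((m : ℂ) • q) := by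
    rw [← euler hq, Finset.mul_sum]
    refine Finset.sum_congr rfl fun i _ => ?_
    rw [pderiv_radSq]; ring
  rw [h2]
  simp only [← MvPolynomial.smul_eq_C_mul]
  rw [smul_smul, smul_smul, add_comm]
  congr 1
  rw [← add_smul]
  congr 1
  push_cast
  ring

lemma lapP_radSq_pow_mul {q : Pn n} {m : ℕ} (hq : q.IsHomogeneous m) (s : ℕ) :
    lapP (radSq n ^ (s + 1) * q) = radSq n ^ (s + 1) * lapP q
      + ((2 * (s + 1) * (2 * m + n + 2 * s) : ℕ) : ℂ) • (radSq n ^ s * q) := by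
  induction s generalizing q m with
  | zero =>
    have e : (2 * (0 + 1) * (2 * m + n + 2 * 0) : ℕ) = 2 * (2 * m + n) := by ring
    rw [pow_one, pow_zero, one_mul, e, lapP_radSq_mul hq]
  | succ s ih =>
    have hq2 : (radSq n * q).IsHomogeneous (2 + m) := isHomogeneous_radSq.mul hq
    have h1 : radSq n ^ (s + 2) * q = radSq n ^ (s + 1) * (radSq n * q) := by ring
    rw [h1, ih hq2, lapP_radSq_mul hq]
    rw [mul_add, mul_smul_comm]
    rw [show radSq n ^ s * (radSq n * q) = radSq n ^ (s + 1) * q by ring]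
    rw [show radSq n ^ (s + 1) * (radSq n * lapP q) = radSq n ^ (s + 2) * lapP q by ring]
    rw [add_assoc, ← add_smul]
    congr 2
    push_cast
    ring

def Ecoef (n j s m : ℕ) : ℕ :=
  ∏ t ∈ Finset.range j, (2 * (s - t) * (2 * m + n + 2 * (s - 1 - t)))

lemma Ecoef_succ (j s m : ℕ) :
    Ecoef n (j + 1) (s + 1) m = 2 * (s + 1) * (2 * m + n + 2 * s) * Ecoef n j s m := by
  rw [Ecoef, Finset.prod_range_succ']
  have h : ∀ t, 2 * ((s + 1) - (t + 1)) * (2 * m + n + 2 * ((s + 1) - 1 - (t + 1)))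
      = 2 * (s - t) * (2 * m + n + 2 * (s - 1 - t)) := by
    intro t
    congr 2 <;> omega
  rw [Finset.prod_congr rfl fun t _ => h t]
  rw [Ecoef]
  have h0 : (s + 1) - 0 = s + 1 := rfl
  have h1 : (s + 1) - 1 - 0 = s := by omega
  rw [h0, h1]
  ring

lemma lapP_iter_radSq_pow :
    ∀ (j s m : ℕ) (q : Pn n), j ≤ s → q.IsHomogeneous m →
    ∃ c : ℕ → ℕ, c 0 = Ecoef n j s m ∧ (∀ k, j < k → c k = 0) ∧
      lapP^[j] (radSq n ^ s * q)
        = ∑ k ∈ Finset.range (j + 1), (c k : ℂ) • (radSq n ^ (s - j + k) * lapP^[k] q) := by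
  intro j
  induction j with
  | zero =>
    intro s m q _ _
    refine ⟨fun k => if k = 0 then 1 else 0, by simp [Ecoef], ?_, ?_⟩
    · intro k hk
      show (if k = 0 then 1 else 0) = 0
      rw [if_neg (by omega)]
    · simp
  | succ j ih =>
    intro s m q hj hq
    obtain ⟨s', rfl⟩ : ∃ s', s = s' + 1 := ⟨s - 1, by omega⟩
    have hq2 : (lapP q).IsHomogeneous (m - 2) := isHomogeneous_lapP hq
    obtain ⟨c1, hc10, hc1z, hc1⟩ := ih (s' + 1) (m - 2) (lapP q) (by omega) hq2
    obtain ⟨c2, hc20, hc2z, hc2⟩ := ih s' m q (by omega) hq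
    refine ⟨fun k => (if k = 0 then 0 else c1 (k - 1))
      + (2 * (s' + 1) * (2 * m + n + 2 * s')) * c2 k, ?_, ?_, ?_⟩
    · show (if (0:ℕ) = 0 then 0 else c1 (0 - 1)) + 2 * (s' + 1) * (2 * m + n + 2 * s') * c2 0
          = Ecoef n (j + 1) (s' + 1) m
      rw [if_pos rfl, hc20, Ecoef_succ, zero_add]
    · intro k hk
      show (if k = 0 then 0 else c1 (k - 1)) + 2 * (s' + 1) * (2 * m + n + 2 * s') * c2 k = 0
      rw [if_neg (by omega), hc1z (k - 1) (by omega), hc2z k (by omega), mul_zero, add_zero]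
    · rw [Function.iterate_succ_apply, lapP_radSq_pow_mul hq s', lapP_iter_add, lapP_iter_smul,
        hc1, hc2]
      have e1 : ∑ k ∈ Finset.range (j + 1),
            (c1 k : ℂ) • (radSq n ^ ((s' + 1) - j + k) * lapP^[k] (lapP q))
          = ∑ k ∈ Finset.range (j + 1),
            (c1 k : ℂ) • (radSq n ^ (s' - j + (k + 1)) * lapP^[k + 1] q) := by
        refine Finset.sum_congr rfl fun k _ => ?_
        rw [show (s' + 1) - j + k = s' - j + (k + 1) from by omega,
          ← Function.iterate_succ_apply]
      rw [e1]
      have hss : ∀ k : ℕ, (s' + 1) - (j + 1) + k = s' - j + k := fun k => by omega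
      have hsplit : ∀ k, (((if k = 0 then 0 else c1 (k - 1))
              + (2 * (s' + 1) * (2 * m + n + 2 * s')) * c2 k : ℕ) : ℂ) •
            (radSq n ^ ((s' + 1) - (j + 1) + k) * lapP^[k] q)
          = (if k = 0 then (0 : ℂ) else (c1 (k - 1) : ℂ)) •
              (radSq n ^ (s' - j + k) * lapP^[k] q)
            + ((2 * (s' + 1) * (2 * m + n + 2 * s') : ℕ) : ℂ) •
              ((c2 k : ℂ) • (radSq n ^ (s' - j + k) * lapP^[k] q)) := by
        intro k
        rw [hss k, smul_smul, ← add_smul]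
        congr 1
        push_cast [apply_ite (fun x : ℕ => (x : ℂ))]
        ring
      rw [Finset.sum_congr rfl fun k _ => hsplit k, Finset.sum_add_distrib]
      congr 1
      · symm
        rw [Finset.sum_range_succ', if_pos rfl, zero_smul, add_zero]
        refine Finset.sum_congr rfl fun k _ => ?_
        rw [if_neg (Nat.succ_ne_zero k), Nat.add_sub_cancel]
      · symm
        rw [Finset.sum_range_succ]
        have hz : c2 (j + 1) = 0 := hc2z (j + 1) (by omega)
        rw [hz]
        simp only [Nat.cast_zero, zero_smul, smul_zero, add_zero]
        rw [Finset.smul_sum]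

lemma Ecoef_eq_epm (p m : ℕ) : Ecoef n p p m = epm n p m := by
  rw [Ecoef, ← Finset.prod_range_reflect]
  have h : ∀ i ∈ Finset.range p,
      2 * (p - (p - 1 - i)) * (2 * m + n + 2 * (p - 1 - (p - 1 - i)))
        = 2 * (i + 1) * (2 * m + n + 2 * i) := by
    intro i hi
    rw [Finset.mem_range] at hi
    congr 2 <;> omega
  rw [Finset.prod_congr rfl h, epm]
  rw [Finset.prod_mul_distrib, Finset.prod_mul_distrib, Finset.prod_const,
    Finset.card_range, Finset.prod_range_add_one_eq_factorial]

lemma FInner_bound (p m : ℕ) {q : Pn n} (hq : q.IsHomogeneous m) :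
    (epm n p m : ℝ) * (FInner q q).re ≤ (FInner (lapP^[p] (radSq n ^ p * q)) q).re := by
  obtain ⟨c, hc0, _, hsum⟩ := lapP_iter_radSq_pow p p m q le_rfl hq
  rw [hsum, FInner_sum_left, Complex.re_sum]
  have hterm : ∀ k, (FInner ((c k : ℂ) • (radSq n ^ (p - p + k) * lapP^[k] q)) q).re
      = (c k : ℝ) * (FInner (lapP^[k] q) (lapP^[k] q)).re := by
    intro k
    rw [FInner_smul_left]
    have he : p - p + k = k := by omega
    rw [he, FInner_radSq_pow_mul_left]
    rw [FInner_self_eq_re (lapP^[k] q), ← Complex.ofReal_natCast, ← Complex.ofReal_mul,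
      Complex.ofReal_re, Complex.ofReal_re]
  rw [Finset.sum_congr rfl fun k _ => hterm k]
  have h0 : (c 0 : ℝ) * (FInner (lapP^[0] q) (lapP^[0] q)).re
      = (epm n p m : ℝ) * (FInner q q).re := by
    rw [hc0, Ecoef_eq_epm, Function.iterate_zero_apply]
  rw [← h0]
  exact Finset.single_le_sum
    (f := fun k => (c k : ℝ) * (FInner (lapP^[k] q) (lapP^[k] q)).re)
    (fun k _ => mul_nonneg (Nat.cast_nonneg _) (FInner_self_re_nonneg _))
    (Finset.mem_range.2 p.succ_pos)

instance findim (m : ℕ) :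
    FiniteDimensional ℂ (MvPolynomial.homogeneousSubmodule (Fin n) ℂ m) := by
  have hle : MvPolynomial.homogeneousSubmodule (Fin n) ℂ m
      ≤ MvPolynomial.restrictTotalDegree (Fin n) ℂ m := by
    intro p hp
    rw [MvPolynomial.mem_restrictTotalDegree]
    exact MvPolynomial.IsHomogeneous.totalDegree_le hp
  exact Submodule.finiteDimensional_of_le hle

noncomputable def core (n m : ℕ) :
    InnerProductSpace.Core ℂ (MvPolynomial.homogeneousSubmodule (Fin n) ℂ m) where
  inner x y := FInner (y : Pn n) (x : Pn n)
  conj_inner_symm x y := FInner_conj _ _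
  re_inner_nonneg x := FInner_self_re_nonneg _
  add_left x y z := by
    show FInner _ (((x + y : _) : Pn n)) = _
    rw [Submodule.coe_add, FInner_add_right]
  smul_left x y r := by
    show FInner _ ((r • x : _) : Pn n) = _
    rw [Submodule.coe_smul, FInner_smul_right]
  definite x h := Subtype.ext (FInner_self_eq_zero h)

noncomputable def Top (n p m : ℕ) :
    Module.End ℂ (MvPolynomial.homogeneousSubmodule (Fin n) ℂ m) where
  toFun q := ⟨lapP^[p] (radSq n ^ p * (q : Pn n)), by
    have hq : (q : Pn n).IsHomogeneous m := q.2
    have h := isHomogeneous_lapP_iter ((isHomogeneous_radSq_pow p).mul hq) p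
    have he : 2 * p + m - 2 * p = m := by omega
    rw [he] at h
    exact h⟩
  map_add' q r := by
    refine Subtype.ext ?_
    show lapP^[p] (radSq n ^ p * ((q : Pn n) + (r : Pn n))) = _
    rw [mul_add, lapP_iter_add]
    rfl
  map_smul' c q := by
    refine Subtype.ext ?_
    show lapP^[p] (radSq n ^ p * (c • (q : Pn n))) = _
    rw [mul_smul_comm, lapP_iter_smul]
    rfl

end Fischer

theorem stmt_13' (n p m : ℕ) (hp : 1 ≤ p) :
    ∃ (ι : Type) (b : Module.Basis ι ℂ (MvPolynomial.homogeneousSubmodule (Fin n) ℂ m)),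
      ∀ i : ι, ∃ μ : ℝ, (epm n p m : ℝ) ≤ μ ∧
        lapP^[p] (radSq n ^ p * (b i : MvPolynomial (Fin n) ℂ)) =
          (μ : ℂ) • (b i : MvPolynomial (Fin n) ℂ) := by
  classical
  set V := MvPolynomial.homogeneousSubmodule (Fin n) ℂ m with hV
  letI cV : InnerProductSpace.Core ℂ V := Fischer.core n m
  letI : NormedAddCommGroup V := InnerProductSpace.Core.toNormedAddCommGroup (𝕜 := ℂ) (F := V)
  letI : InnerProductSpace ℂ V := InnerProductSpace.ofCore cV.toCore
  have hT : (Fischer.Top n p m).IsSymmetric := by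
    intro x y
    show FInner (y : Fischer.Pn n) (lapP^[p] (radSq n ^ p * (x : Fischer.Pn n)))
      = FInner (lapP^[p] (radSq n ^ p * (y : Fischer.Pn n))) (x : Fischer.Pn n)
    rw [← Fischer.FInner_radSq_pow_mul_left, Fischer.FInner_lapP_iter_left]
  have hn : Module.finrank ℂ V = Module.finrank ℂ V := rfl
  refine ⟨Fin (Module.finrank ℂ V), (hT.eigenvectorBasis hn).toBasis, fun i => ?_⟩
  refine ⟨hT.eigenvalues hn i, ?_, ?_⟩
  · -- eigenvalue bound
    set q : Fischer.Pn n := ((hT.eigenvectorBasis hn).toBasis i : Fischer.Pn n) with hqdef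
    have hqmem : q.IsHomogeneous m := ((hT.eigenvectorBasis hn).toBasis i).2
    have heig := hT.apply_eigenvectorBasis hn i
    have heig' : lapP^[p] (radSq n ^ p * q)
        = ((hT.eigenvalues hn i : ℂ)) • q := by
      have hq2 : q = ((hT.eigenvectorBasis hn i : V) : Fischer.Pn n) := by
        rw [hqdef, OrthonormalBasis.coe_toBasis]
      rw [hq2]
      calc lapP^[p] (radSq n ^ p * ((hT.eigenvectorBasis hn i : V) : Fischer.Pn n))
          = ((Fischer.Top n p m (hT.eigenvectorBasis hn i) : V) : Fischer.Pn n) := rfl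
        _ = (((hT.eigenvalues hn i : ℂ) • (hT.eigenvectorBasis hn i : V) : V) : Fischer.Pn n) :=
            congrArg (fun z : V => (z : Fischer.Pn n)) heig
        _ = (hT.eigenvalues hn i : ℂ) • ((hT.eigenvectorBasis hn i : V) : Fischer.Pn n) := rfl
    have hb := Fischer.FInner_bound (n := n) p m hqmem
    rw [heig', Fischer.FInner_smul_left] at hb
    have hre : ((hT.eigenvalues hn i : ℂ) * FInner q q).re
        = (hT.eigenvalues hn i) * (FInner q q).re := by
      rw [Fischer.FInner_self_eq_re q, ← Complex.ofReal_mul, Complex.ofReal_re,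
        Complex.ofReal_re]
    rw [hre] at hb
    have hne : q ≠ 0 := by
      intro h0
      have : (hT.eigenvectorBasis hn).toBasis i = 0 := Subtype.ext (by simpa [hqdef] using h0)
      exact (hT.eigenvectorBasis hn).toBasis.ne_zero i this
    have hpos : 0 < (FInner q q).re := by
      rcases lt_or_eq_of_le (Fischer.FInner_self_re_nonneg q) with h | h
      · exact h
      · exfalso
        apply hne
        apply Fischer.FInner_self_eq_zero
        rw [Fischer.FInner_self_eq_re q, ← h]
        simp
    exact le_of_mul_le_mul_right hb hpos
  · have heig := hT.apply_eigenvectorBasis hn i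
    rw [OrthonormalBasis.coe_toBasis]
    calc lapP^[p] (radSq n ^ p * ((hT.eigenvectorBasis hn i : V) : Fischer.Pn n))
        = ((Fischer.Top n p m (hT.eigenvectorBasis hn i) : V) : Fischer.Pn n) := rfl
      _ = (((hT.eigenvalues hn i : ℂ) • (hT.eigenvectorBasis hn i : V) : V) : Fischer.Pn n) :=
          congrArg (fun z : V => (z : Fischer.Pn n)) heig
      _ = (hT.eigenvalues hn i : ℂ) • ((hT.eigenvectorBasis hn i : V) : Fischer.Pn n) := rfl

/-- the space `P_m(ℝⁿ)` of homogeneous polynomials of degree `m` has a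
basis of eigenvectors of `F_{2p}(q) = Δ^p(|x|^{2p} q)`, all of whose eigenvalues are real
and `≥ e_{p,m}`. -/
theorem stmt_13 (n p m : ℕ) (hp : 1 ≤ p) :
    ∃ (ι : Type) (b : Module.Basis ι ℂ (MvPolynomial.homogeneousSubmodule (Fin n) ℂ m)),
      ∀ i : ι, ∃ μ : ℝ, (epm n p m : ℝ) ≤ μ ∧
        lapP^[p] (radSq n ^ p * (b i : MvPolynomial (Fin n) ℂ)) =
          (μ : ℂ) • (b i : MvPolynomial (Fin n) ℂ) := by
  classical
  set V := MvPolynomial.homogeneousSubmodule (Fin n) ℂ m with hV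
  letI cV : InnerProductSpace.Core ℂ V := Fischer.core n m
  letI : NormedAddCommGroup V := InnerProductSpace.Core.toNormedAddCommGroup (𝕜 := ℂ) (F := V)
  letI : InnerProductSpace ℂ V := InnerProductSpace.ofCore cV.toCore
  have hT : (Fischer.Top n p m).IsSymmetric := by
    intro x y
    show FInner (y : Fischer.Pn n) (lapP^[p] (radSq n ^ p * (x : Fischer.Pn n)))
      = FInner (lapP^[p] (radSq n ^ p * (y : Fischer.Pn n))) (x : Fischer.Pn n)
    rw [← Fischer.FInner_radSq_pow_mul_left, Fischer.FInner_lapP_iter_left]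
  have hn : Module.finrank ℂ V = Module.finrank ℂ V := rfl
  refine ⟨Fin (Module.finrank ℂ V), (hT.eigenvectorBasis hn).toBasis, fun i => ?_⟩
  refine ⟨hT.eigenvalues hn i, ?_, ?_⟩
  · -- eigenvalue bound
    set q : Fischer.Pn n := ((hT.eigenvectorBasis hn).toBasis i : Fischer.Pn n) with hqdef
    have hqmem : q.IsHomogeneous m := ((hT.eigenvectorBasis hn).toBasis i).2
    have heig := hT.apply_eigenvectorBasis hn i
    have heig' : lapP^[p] (radSq n ^ p * q)
        = ((hT.eigenvalues hn i : ℂ)) • q := by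
      have hq2 : q = ((hT.eigenvectorBasis hn i : V) : Fischer.Pn n) := by
        rw [hqdef, OrthonormalBasis.coe_toBasis]
      rw [hq2]
      calc lapP^[p] (radSq n ^ p * ((hT.eigenvectorBasis hn i : V) : Fischer.Pn n))
          = ((Fischer.Top n p m (hT.eigenvectorBasis hn i) : V) : Fischer.Pn n) := rfl
        _ = (((hT.eigenvalues hn i : ℂ) • (hT.eigenvectorBasis hn i : V) : V) : Fischer.Pn n) :=
            congrArg (fun z : V => (z : Fischer.Pn n)) heig
        _ = (hT.eigenvalues hn i : ℂ) • ((hT.eigenvectorBasis hn i : V) : Fischer.Pn n) := rfl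
    have hb := Fischer.FInner_bound (n := n) p m hqmem
    rw [heig', Fischer.FInner_smul_left] at hb
    have hre : ((hT.eigenvalues hn i : ℂ) * FInner q q).re
        = (hT.eigenvalues hn i) * (FInner q q).re := by
      rw [Fischer.FInner_self_eq_re q, ← Complex.ofReal_mul, Complex.ofReal_re,
        Complex.ofReal_re]
    rw [hre] at hb
    have hne : q ≠ 0 := by
      intro h0
      have : (hT.eigenvectorBasis hn).toBasis i = 0 := Subtype.ext (by simpa [hqdef] using h0)
      exact (hT.eigenvectorBasis hn).toBasis.ne_zero i this
    have hpos : 0 < (FInner q q).re := by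
      rcases lt_or_eq_of_le (Fischer.FInner_self_re_nonneg q) with h | h
      · exact h
      · exfalso
        apply hne
        apply Fischer.FInner_self_eq_zero
        rw [Fischer.FInner_self_eq_re q, ← h]
        simp
    exact le_of_mul_le_mul_right hb hpos
  · have heig := hT.apply_eigenvectorBasis hn i
    rw [OrthonormalBasis.coe_toBasis]
    calc lapP^[p] (radSq n ^ p * ((hT.eigenvectorBasis hn i : V) : Fischer.Pn n))
        = ((Fischer.Top n p m (hT.eigenvectorBasis hn i) : V) : Fischer.Pn n) := rfl
      _ = (((hT.eigenvalues hn i : ℂ) • (hT.eigenvectorBasis hn i : V) : V) : Fischer.Pn n) :=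
          congrArg (fun z : V => (z : Fischer.Pn n)) heig
      _ = (hT.eigenvalues hn i : ℂ) • ((hT.eigenvectorBasis hn i : V) : Fischer.Pn n) := rfl
end

section
/- Let n > 1 and p ≥ 1 be integers, and suppose that for some integer l ≥ 0 and some constant C > 0 the estimate ‖Δ^p(|x|^{2p}·f_m)‖_rF ≥ C √(m^l) ‖|x|^{2p}·f_m‖_rF holds for every m ∈ ℕ₀ and every homogeneous polynomial f_m of degree m in n variables. Then l = 0. -/
open MvPolynomial MeasureTheory Filter Matrix

noncomputable section
open Real Finset MeasureTheory MvPolynomial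

namespace SAux



lemma lapP_C_mul {n : ℕ} (c : ℂ) (f : MvPolynomial (Fin n) ℂ) :
    lapP (C c * f) = C c * lapP f := by
  simp [lapP, pderiv_C_mul, Finset.mul_sum]

lemma lapP_iter_C_mul {n : ℕ} (p : ℕ) (c : ℂ) (f : MvPolynomial (Fin n) ℂ) :
    lapP^[p] (C c * f) = C c * lapP^[p] f := by
  induction p generalizing f with
  | zero => simp
  | succ p ih => rw [Function.iterate_succ_apply, Function.iterate_succ_apply,
      lapP_C_mul, ih]

variable {n : ℕ} (a b : Fin n)

/-- coefficient vector of `x_a + i x_b`. -/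
def ci (i : Fin n) : ℂ := (if a = i then 1 else 0) + Complex.I * (if b = i then 1 else 0)

def zb : MvPolynomial (Fin n) ℂ := X a + C Complex.I * X b

lemma pderiv_zb (i : Fin n) : pderiv i (zb a b) = C (ci a b i) := by
  classical
  simp only [zb, ci, map_add, pderiv_C_mul, pderiv_X, _root_.map_mul]
  by_cases h1 : a = i <;> by_cases h2 : b = i <;>
    simp [h1, h2, Pi.single_apply, Complex.ofReal_one]

lemma sum_X_mul_ci : ∑ i, X i * C (ci a b i) = zb a b := by
  classical
  simp only [ci, zb, map_add, _root_.map_mul, mul_add]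
  rw [Finset.sum_add_distrib]
  congr 1
  · simp [Finset.mul_sum, apply_ite (C : ℂ → MvPolynomial (Fin n) ℂ), mul_ite,
      Finset.sum_ite_eq, eq_comm]
  · simp [apply_ite (C : ℂ → MvPolynomial (Fin n) ℂ), mul_ite,
      Finset.sum_ite_eq, eq_comm, mul_comm]

lemma sum_ci_sq (hab : a ≠ b) : ∑ i, (ci a b i) ^ 2 = 0 := by
  classical
  have : ∀ i, (ci a b i) ^ 2 =
      (if a = i then 1 else 0) + ((Complex.I ^ 2) * if b = i then 1 else 0) := by
    intro i
    by_cases h1 : a = i <;> by_cases h2 : b = i <;>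
      simp [ci, h1, h2] <;> first | (exfalso; exact hab (h1.trans h2.symm)) | ring
  simp [this, Finset.sum_add_distrib, Finset.sum_ite_eq, Complex.I_sq]

lemma pderiv_zb_pow (m : ℕ) (i : Fin n) :
    pderiv i ((zb a b) ^ m) = (m : ℂ) • ((zb a b) ^ (m - 1) * C (ci a b i)) := by
  rw [pderiv_pow, pderiv_zb, smul_eq_C_mul, map_natCast]
  ring

lemma euler_zb (m : ℕ) :
    ∑ i, X i * pderiv i ((zb a b) ^ m) = C (m : ℂ) * (zb a b) ^ m := by
  classical
  simp only [pderiv_zb_pow, smul_eq_C_mul]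
  have : ∑ i, X i * (C (m:ℂ) * ((zb a b) ^ (m-1) * C (ci a b i)))
      = C (m:ℂ) * ((zb a b) ^ (m-1) * ∑ i, X i * C (ci a b i)) := by
    rw [Finset.mul_sum, Finset.mul_sum]; congr 1; ext i; ring
  rw [this, sum_X_mul_ci]
  cases m with
  | zero => simp
  | succ m => simp only [Nat.add_sub_cancel, pow_succ]

lemma harmonic_zb (hab : a ≠ b) (m : ℕ) : lapP ((zb a b) ^ m) = 0 := by
  classical
  unfold lapP
  have step : ∀ i : Fin n, pderiv i (pderiv i ((zb a b) ^ m))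
      = ((m : MvPolynomial (Fin n) ℂ) * ((m - 1 : ℕ) : MvPolynomial (Fin n) ℂ)
        * (zb a b) ^ (m - 1 - 1)) * C (ci a b i) ^ 2 := by
    intro i
    rw [pderiv_zb_pow, smul_eq_C_mul, pderiv_C_mul, pderiv_mul, pderiv_C,
      pderiv_zb_pow, smul_eq_C_mul, map_natCast, map_natCast]
    ring
  simp only [step]
  rw [← Finset.mul_sum]
  have : (∑ i : Fin n, (C (ci a b i) : MvPolynomial (Fin n) ℂ) ^ 2)
      = C (∑ i, (ci a b i) ^ 2) := by
    rw [map_sum]; simp [map_pow]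
  rw [this, sum_ci_sq a b hab]
  simp


lemma pderiv_radSq (i : Fin n) : pderiv i (radSq n) = 2 * X i := by
  classical
  unfold radSq
  rw [map_sum]
  have h : ∀ j : Fin n, pderiv i ((X j : MvPolynomial (Fin n) ℂ) ^ 2)
      = if j = i then 2 * X i else 0 := by
    intro j
    by_cases h : j = i
    · subst h
      rw [pderiv_pow, pderiv_X_self, if_pos rfl]
      push_cast
      ring
    · rw [pderiv_pow, pderiv_X_of_ne h, if_neg h]
      ring
  simp [h]

lemma pderiv_radSq_pow (k : ℕ) (i : Fin n) :
    pderiv i (radSq n ^ k)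
      = 2 * (k : MvPolynomial (Fin n) ℂ) * radSq n ^ (k - 1) * X i := by
  rw [pderiv_pow, pderiv_radSq]
  ring

lemma radSq_pow_pred (j : ℕ) :
    (j : MvPolynomial (Fin n) ℂ) * radSq n ^ (j - 1) * radSq n
      = (j : MvPolynomial (Fin n) ℂ) * radSq n ^ j := by
  cases j with
  | zero => simp
  | succ j => rw [Nat.add_sub_cancel, pow_succ]; ring

lemma lapP_mul (f g : MvPolynomial (Fin n) ℂ) :
    lapP (f * g) = lapP f * g + 2 * ∑ i, pderiv i f * pderiv i g + f * lapP g := by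
  unfold lapP
  simp only [pderiv_mul, map_add]
  rw [Finset.sum_add_distrib]
  rw [show (∑ i : Fin n, ((pderiv i) ((pderiv i) f) * g + (pderiv i) f * (pderiv i) g))
      = (∑ i : Fin n, (pderiv i) ((pderiv i) f)) * g
        + ∑ i : Fin n, (pderiv i) f * (pderiv i) g by
    rw [Finset.sum_add_distrib, Finset.sum_mul]]
  rw [show (∑ i : Fin n, ((pderiv i) f * (pderiv i) g + f * (pderiv i) ((pderiv i) g)))
      = (∑ i : Fin n, (pderiv i) f * (pderiv i) g)
        + f * ∑ i : Fin n, (pderiv i) ((pderiv i) g) by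
    rw [Finset.sum_add_distrib, Finset.mul_sum]]
  ring

lemma sum_X_mul_X : ∑ i : Fin n, (X i * X i : MvPolynomial (Fin n) ℂ) = radSq n := by
  unfold radSq
  congr 1
  ext i
  ring

lemma pderiv_pderiv_radSq_pow (j : ℕ) (i : Fin n) :
    pderiv i (pderiv i (radSq n ^ (j + 1)))
      = ((2 * (j+1) : ℕ) : MvPolynomial (Fin n) ℂ)
          * (((2 * j : ℕ) : MvPolynomial (Fin n) ℂ) * radSq n ^ (j-1) * (X i * X i))
        + ((2 * (j+1) : ℕ) : MvPolynomial (Fin n) ℂ) * radSq n ^ j := by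
  rw [pderiv_radSq_pow, Nat.add_sub_cancel]
  rw [show (2 : MvPolynomial (Fin n) ℂ) * ((j+1 : ℕ) : MvPolynomial (Fin n) ℂ)
        * radSq n ^ j * X i
      = ((2*(j+1) : ℕ) : MvPolynomial (Fin n) ℂ) * (radSq n ^ j * X i) by
    push_cast; ring]
  rw [← map_natCast (C : ℂ →+* MvPolynomial (Fin n) ℂ), pderiv_C_mul, pderiv_mul,
    pderiv_radSq_pow, pderiv_X_self, map_natCast]
  push_cast
  ring

lemma lapP_radSq_pow (j : ℕ) :
    lapP (radSq n ^ (j + 1))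
      = ((2 * (j+1) * (n + 2 * j) : ℕ) : MvPolynomial (Fin n) ℂ) * radSq n ^ j := by
  unfold lapP
  simp only [pderiv_pderiv_radSq_pow]
  rw [Finset.sum_add_distrib, ← Finset.mul_sum, ← Finset.mul_sum, ← Finset.mul_sum,
    sum_X_mul_X, Finset.sum_const, Finset.card_univ, Fintype.card_fin, nsmul_eq_mul]
  have hrs := radSq_pow_pred (n := n) j
  push_cast at hrs ⊢
  linear_combination (4 * ((j:MvPolynomial (Fin n) ℂ)+1)) * hrs

lemma lapP_radSq_pow_mul_zb (hab : a ≠ b) (j m : ℕ) :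
    lapP (radSq n ^ (j + 1) * (zb a b) ^ m)
      = ((2 * (j+1) * (2 * m + n + 2 * j) : ℕ) : MvPolynomial (Fin n) ℂ)
          * (radSq n ^ j * (zb a b) ^ m) := by
  rw [lapP_mul, lapP_radSq_pow, harmonic_zb a b hab, mul_zero, add_zero]
  have hcross : ∑ i, pderiv i (radSq n ^ (j+1)) * pderiv i ((zb a b) ^ m)
      = 2 * (((j+1:ℕ)) : MvPolynomial (Fin n) ℂ) * radSq n ^ j
          * (C (m:ℂ) * (zb a b) ^ m) := by
    have hterm : ∀ i : Fin n, pderiv i (radSq n ^ (j+1)) * pderiv i ((zb a b) ^ m)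
        = 2 * (((j+1:ℕ)) : MvPolynomial (Fin n) ℂ) * radSq n ^ j
            * (X i * pderiv i ((zb a b)^m)) := by
      intro i
      rw [pderiv_radSq_pow, Nat.add_sub_cancel]
      ring
    simp only [hterm]
    rw [← Finset.mul_sum, euler_zb]
  rw [hcross, map_natCast]
  push_cast
  ring

lemma epm_succ_nat (p m : ℕ) :
    epm n (p+1) m = 2 * (p+1) * (2 * m + n + 2 * p) * epm n p m := by
  unfold epm
  rw [Finset.prod_range_succ, pow_succ, Nat.factorial_succ]
  ring

lemma key_eigen (hab : a ≠ b) (m : ℕ) : ∀ p : ℕ,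
    lapP^[p] (radSq n ^ p * (zb a b) ^ m) = C ((epm n p m : ℕ) : ℂ) * (zb a b) ^ m := by
  intro p
  induction p with
  | zero => simp [epm]
  | succ p ih =>
      rw [Function.iterate_succ_apply, lapP_radSq_pow_mul_zb a b hab p m,
        ← map_natCast (C : ℂ →+* MvPolynomial (Fin n) ℂ),
        lapP_iter_C_mul, ih, ← mul_assoc, ← _root_.map_mul]
      congr 2
      rw [← Nat.cast_mul, epm_succ_nat]



lemma integrable_even_moment (j : ℕ) :
    Integrable (fun x : ℝ => x ^ (2*j) * Real.exp (-x^2)) := by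
  have hb : Integrable (fun x : ℝ => (2:ℝ)^j * j.factorial * Real.exp (-(1/2) * x^2)) :=
    (integrable_exp_neg_mul_sq (by norm_num : (0:ℝ) < 1/2)).const_mul _
  refine hb.mono (Continuous.aestronglyMeasurable (by continuity)) (ae_of_all _ fun x => ?_)
  have h1 : (x^2/2)^j / j.factorial ≤ Real.exp (x^2/2) := by
    calc (x^2/2)^j / j.factorial ≤ ∑ i ∈ range (j+1), (x^2/2)^i / i.factorial :=
          Finset.single_le_sum (f := fun i => (x^2/2)^i / (i.factorial:ℝ))
            (fun i _ => by positivity) (self_mem_range_succ j)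
      _ ≤ Real.exp (x^2/2) := Real.sum_le_exp_of_nonneg (by positivity) (j+1)
  have h1' : (x^2/2)^j ≤ j.factorial * Real.exp (x^2/2) := by
    rw [div_le_iff₀ (by positivity : (0:ℝ) < j.factorial)] at h1
    linarith
  have key : (x^2)^j ≤ 2^j * j.factorial * Real.exp (x^2/2) := by
    calc (x^2)^j = 2^j * (x^2/2)^j := by rw [div_pow]; field_simp
      _ ≤ 2^j * (j.factorial * Real.exp (x^2/2)) :=
          mul_le_mul_of_nonneg_left h1' (by positivity)
      _ = 2^j * j.factorial * Real.exp (x^2/2) := by ring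
  have habs : ‖x ^ (2*j) * Real.exp (-x^2)‖ = (x^2)^j * Real.exp (-x^2) := by
    rw [norm_mul, Real.norm_eq_abs, Real.norm_eq_abs, abs_of_nonneg (Real.exp_pos _).le,
      abs_pow]
    congr 1
    rw [pow_mul, sq_abs]
  have hbn : ‖(2:ℝ)^j * j.factorial * Real.exp (-(1/2)*x^2)‖
      = 2^j * j.factorial * Real.exp (-(1/2)*x^2) := by
    rw [Real.norm_eq_abs, abs_of_nonneg (by positivity)]
  rw [habs, hbn]
  calc (x^2)^j * Real.exp (-x^2)
      ≤ (2^j * j.factorial * Real.exp (x^2/2)) * Real.exp (-x^2) :=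
        mul_le_mul_of_nonneg_right key (Real.exp_pos _).le
    _ = 2^j * j.factorial * Real.exp (-(1/2)*x^2) := by
        rw [mul_assoc, mul_assoc, ← Real.exp_add]
        ring_nf

lemma moment_eq (j : ℕ) :
    ∫ x : ℝ, x ^ (2*j) * Real.exp (-x^2) = Real.Gamma (j + 1/2) := by
  have h1 : ∫ x : ℝ, x ^ (2*j) * Real.exp (-x^2)
      = 2 * ∫ x in Set.Ioi (0:ℝ), x ^ (2*j) * Real.exp (-x^2) := by
    rw [← integral_comp_abs (f := fun t => t ^ (2*j) * Real.exp (-t^2))]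
    congr 1
    ext x
    rw [Even.pow_abs (even_two_mul j), sq_abs]
  have hgam : Real.Gamma ((j:ℝ) + 1/2)
      = ∫ y in Set.Ioi (0:ℝ), Real.exp (-y) * y ^ ((j:ℝ) - 1/2) := by
    rw [Real.Gamma_eq_integral (by positivity), show (j:ℝ) + 1/2 - 1 = (j:ℝ) - 1/2 by ring]
  have hsub : (∫ x in Set.Ioi (0:ℝ), ((2:ℝ) * x ^ ((2:ℝ) - 1)) •
        (fun y => Real.exp (-y) * y ^ ((j:ℝ) - 1/2)) (x ^ (2:ℝ)))
      = ∫ y in Set.Ioi (0:ℝ), Real.exp (-y) * y ^ ((j:ℝ) - 1/2) :=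
    integral_comp_rpow_Ioi_of_pos (g := fun y => Real.exp (-y) * y ^ ((j:ℝ) - 1/2)) (p := 2) (by norm_num)
  have heq : ∀ x ∈ Set.Ioi (0:ℝ),
      ((2:ℝ) * x ^ ((2:ℝ) - 1)) •
        (fun y => Real.exp (-y) * y ^ ((j:ℝ) - 1/2)) (x ^ (2:ℝ))
      = 2 * (x ^ (2*j) * Real.exp (-x^2)) := by
    intro x hx
    have hx0 : (0:ℝ) < x := hx
    have hr2 : x ^ ((2:ℝ)) = x ^ (2:ℕ) := by
      rw [← Real.rpow_natCast x 2]; norm_num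
    have : (x ^ ((2:ℝ))) ^ ((j:ℝ) - 1/2) = x ^ ((2:ℝ) * ((j:ℝ) - 1/2)) := by
      rw [← Real.rpow_mul hx0.le]
    simp only [this, smul_eq_mul]
    have h21 : x ^ ((2:ℝ) - 1) = x := by
      norm_num
    rw [h21, hr2]
    have hxp : x ^ ((2:ℝ) * ((j:ℝ) - 1/2)) = x ^ (2*j) / x := by
      rw [show (2:ℝ) * ((j:ℝ) - 1/2) = 2*(j:ℝ) - 1 by ring]
      rw [Real.rpow_sub hx0, Real.rpow_one]
      congr 1
      rw [show (2:ℝ)*(j:ℝ) = ((2*j : ℕ) : ℝ) by push_cast; ring, Real.rpow_natCast]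
    rw [hxp]
    field_simp
  rw [h1, hgam, ← hsub, MeasureTheory.setIntegral_congr_fun measurableSet_Ioi heq]
  rw [MeasureTheory.integral_const_mul]

lemma pow_exp_bound (N : ℕ) {t : ℝ} (ht : 0 ≤ t) :
    t ^ N * Real.exp (-t) ≤ 2^N * N.factorial * Real.exp (-(1/2) * t) := by
  have h1 : (t/2)^N / N.factorial ≤ Real.exp (t/2) := by
    calc (t/2)^N / N.factorial ≤ ∑ i ∈ range (N+1), (t/2)^i / i.factorial :=
          Finset.single_le_sum (f := fun i => (t/2)^i / (i.factorial:ℝ))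
            (fun i _ => by positivity) (self_mem_range_succ N)
      _ ≤ Real.exp (t/2) := Real.sum_le_exp_of_nonneg (by positivity) (N+1)
  have h1' : (t/2)^N ≤ N.factorial * Real.exp (t/2) := by
    rw [div_le_iff₀ (by positivity : (0:ℝ) < N.factorial)] at h1
    linarith
  have key : t^N ≤ 2^N * N.factorial * Real.exp (t/2) := by
    calc t^N = 2^N * (t/2)^N := by rw [div_pow]; field_simp
      _ ≤ 2^N * (N.factorial * Real.exp (t/2)) :=
          mul_le_mul_of_nonneg_left h1' (by positivity)
      _ = 2^N * N.factorial * Real.exp (t/2) := by ring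
  calc t^N * Real.exp (-t) ≤ (2^N * N.factorial * Real.exp (t/2)) * Real.exp (-t) :=
        mul_le_mul_of_nonneg_right key (Real.exp_pos _).le
    _ = 2^N * N.factorial * Real.exp (-(1/2)*t) := by
        rw [mul_assoc, mul_assoc, ← Real.exp_add]
        ring_nf



lemma T_le_S {n : ℕ} (a b : Fin n) (hab : a ≠ b) (x : Fin n → ℝ) :
    (x a)^2 + (x b)^2 ≤ ∑ i, (x i)^2 := by
  classical
  have : ∑ i ∈ ({a, b} : Finset (Fin n)), (x i)^2 = (x a)^2 + (x b)^2 :=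
    Finset.sum_pair hab
  rw [← this]
  exact Finset.sum_le_sum_of_subset_of_nonneg (Finset.subset_univ _)
    (fun i _ _ => sq_nonneg _)

lemma integrable_big {n : ℕ} (a b : Fin n) (hab : a ≠ b) (p m : ℕ) :
    Integrable (fun x : Fin n → ℝ =>
      ((∑ i, (x i)^2)^2)^p * ((x a)^2 + (x b)^2)^m * Real.exp (-(∑ i, (x i)^2))) := by
  classical
  set N := 2*p + m with hN
  have hbnd : Integrable (fun x : Fin n → ℝ =>
      (2:ℝ)^N * N.factorial * ∏ i, Real.exp (-(1/2) * (x i)^2)) :=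
    (Integrable.fintype_prod (f := fun (_ : Fin n) (t:ℝ) => Real.exp (-(1/2) * t^2))
      (fun i => integrable_exp_neg_mul_sq (by norm_num))).const_mul _
  refine hbnd.mono (Continuous.aestronglyMeasurable (by fun_prop)) (ae_of_all _ fun x => ?_)
  have hS : (0:ℝ) ≤ ∑ i, (x i)^2 := Finset.sum_nonneg fun i _ => sq_nonneg _
  have hT : (0:ℝ) ≤ (x a)^2 + (x b)^2 := by positivity
  have hprod : ∏ i, Real.exp (-(1/2) * (x i)^2) = Real.exp (-(1/2) * ∑ i, (x i)^2) := by
    rw [← Real.exp_sum]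
    congr 1
    rw [Finset.mul_sum]
  rw [Real.norm_eq_abs, Real.norm_eq_abs, abs_of_nonneg (by positivity),
    abs_of_nonneg (by positivity), hprod]
  calc ((∑ i, (x i)^2)^2)^p * ((x a)^2 + (x b)^2)^m * Real.exp (-(∑ i, (x i)^2))
      ≤ ((∑ i, (x i)^2)^2)^p * (∑ i, (x i)^2)^m * Real.exp (-(∑ i, (x i)^2)) := by
        apply mul_le_mul_of_nonneg_right _ (Real.exp_pos _).le
        exact mul_le_mul_of_nonneg_left (pow_le_pow_left₀ hT (T_le_S a b hab x) m)
          (by positivity)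
    _ = (∑ i, (x i)^2)^N * Real.exp (-(∑ i, (x i)^2)) := by
        rw [← pow_mul, ← pow_add, hN]
    _ ≤ 2^N * N.factorial * Real.exp (-(1/2) * ∑ i, (x i)^2) := pow_exp_bound N hS


lemma epm_le_nat (n p m : ℕ) (hn : 1 < n) :
    epm n p m ≤ (2^p * p.factorial * (n+2*p)^p) * (m+1)^p := by
  unfold epm
  have h := Finset.prod_le_pow_card (Finset.range p)
    (fun i => 2 * m + n + 2 * i) ((n+2*p)*(m+1)) ?_
  · calc 2^p * p.factorial * ∏ i ∈ Finset.range p, (2 * m + n + 2 * i)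
        ≤ 2^p * p.factorial * ((n+2*p)*(m+1))^(Finset.card (Finset.range p)) :=
          Nat.mul_le_mul_left _ h
      _ = (2^p * p.factorial * (n+2*p)^p) * (m+1)^p := by
          rw [Finset.card_range, mul_pow]; ring
  · intro i hi
    have hip : i < p := Finset.mem_range.mp hi
    nlinarith

lemma fact_aux (m : ℕ) : ∀ q : ℕ, m.factorial * (m+1)^q ≤ (m+q).factorial := by
  intro q
  induction q with
  | zero => simp
  | succ q ih =>
      calc m.factorial * (m+1)^(q+1) = (m.factorial * (m+1)^q) * (m+1) := by ring
        _ ≤ (m+q).factorial * (m+1) := Nat.mul_le_mul_right _ ih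
        _ ≤ (m+q).factorial * (m+q+1) := Nat.mul_le_mul_left _ (by omega)
        _ = (m+(q+1)).factorial := by
            rw [show m+(q+1) = (m+q)+1 from rfl, Nat.factorial_succ]
            ring



/-- exponent vector -/
lemma hG_aux (j : ℕ) : Real.Gamma ((j:ℝ) + 1 + 1/2) = ((j:ℝ) + 1/2) * Real.Gamma ((j:ℝ) + 1/2) := by
  have h := Real.Gamma_add_one (s := (j:ℝ) + 1/2) (by positivity)
  rw [show (j:ℝ) + 1 + 1/2 = (j:ℝ) + 1/2 + 1 by ring, h]

/-- `W k = ∑_{j=0}^k C(k,j) Γ(j+½) Γ(k-j+½) = π k!`. -/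
lemma W_eq (k : ℕ) :
    ∑ j ∈ range (k+1), (k.choose j : ℝ) * Gamma (j + 1/2) * Gamma ((k-j : ℕ) + 1/2)
      = π * k.factorial := by
  induction k with
  | zero =>
      rw [Finset.sum_range_one]
      norm_num
      rw [Real.Gamma_one_half_eq]
      exact Real.mul_self_sqrt pi_nonneg
  | succ k ih =>
      rw [Finset.sum_range_succ']
      have hsplit : ∑ j ∈ range (k+1),
          ((k+1).choose (j+1) : ℝ) * Gamma (↑(j+1) + 1/2) * Gamma ((k+1-(j+1) : ℕ) + 1/2)
          = (∑ j ∈ range (k+1),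
              (k.choose j : ℝ) * Gamma (↑(j+1) + 1/2) * Gamma ((k-j : ℕ) + 1/2))
            + ∑ j ∈ range (k+1),
              (k.choose (j+1) : ℝ) * Gamma (↑(j+1) + 1/2) * Gamma ((k-j : ℕ) + 1/2) := by
        rw [← Finset.sum_add_distrib]
        refine Finset.sum_congr rfl fun j hj => ?_
        rw [Nat.choose_succ_succ, Nat.succ_sub_succ]
        push_cast
        ring
      rw [hsplit]
      -- second sum plus the `j = 0` term
      have hshift : (∑ j ∈ range (k+1),
            (k.choose (j+1) : ℝ) * Gamma (↑(j+1) + 1/2) * Gamma ((k-j : ℕ) + 1/2))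
          + ((k+1).choose 0 : ℝ) * Gamma (↑(0:ℕ) + 1/2) * Gamma ((k+1-0 : ℕ) + 1/2)
          = ∑ j ∈ range (k+1),
              (k.choose j : ℝ) * Gamma (↑j + 1/2) * Gamma (↑(k-j : ℕ) + 1 + 1/2) := by
        rw [Finset.sum_range_succ' (fun j => (k.choose j : ℝ) * Gamma (↑j + 1/2)
            * Gamma (↑(k-j : ℕ) + 1 + 1/2))]
        congr 1
        · rw [Finset.sum_range_succ]
          simp only [Nat.choose_succ_self, Nat.cast_zero, zero_mul, add_zero]
          refine Finset.sum_congr rfl fun j hj => ?_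
          have hjk : j < k := Finset.mem_range.mp hj
          have : (k - (j+1) : ℕ) + 1 = (k - j : ℕ) := by omega
          rw [← this]
          push_cast
          ring_nf
        · have : (k + 1 - 0 : ℕ) = (k - 0 : ℕ) + 1 := by omega
          rw [this]
          push_cast
          ring_nf
          simp [Nat.choose_zero_right]
      rw [add_assoc, hshift]
      -- now apply Gamma recursion on both sums and combine
      have hS1 : ∑ j ∈ range (k+1),
            (k.choose j : ℝ) * Gamma (↑(j+1) + 1/2) * Gamma ((k-j : ℕ) + 1/2)
          = ∑ j ∈ range (k+1), (k.choose j : ℝ) * (((j:ℝ) + 1/2)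
              * (Gamma (↑j + 1/2) * Gamma ((k-j : ℕ) + 1/2))) := by
        refine Finset.sum_congr rfl fun j hj => ?_
        push_cast
        rw [hG_aux j]
        ring
      have hS2 : ∑ j ∈ range (k+1),
            (k.choose j : ℝ) * Gamma (↑j + 1/2) * Gamma (↑(k-j : ℕ) + 1 + 1/2)
          = ∑ j ∈ range (k+1), (k.choose j : ℝ) * ((((k-j:ℕ):ℝ) + 1/2)
              * (Gamma (↑j + 1/2) * Gamma ((k-j : ℕ) + 1/2))) := by
        refine Finset.sum_congr rfl fun j hj => ?_
        rw [hG_aux (k-j)]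
        ring
      rw [hS1, hS2, ← Finset.sum_add_distrib]
      have hfinal : ∑ j ∈ range (k+1), ((k.choose j : ℝ) * (((j:ℝ) + 1/2)
              * (Gamma (↑j + 1/2) * Gamma ((k-j : ℕ) + 1/2)))
            + (k.choose j : ℝ) * ((((k-j:ℕ):ℝ) + 1/2)
              * (Gamma (↑j + 1/2) * Gamma ((k-j : ℕ) + 1/2))))
          = ((k:ℝ) + 1) * ∑ j ∈ range (k+1),
              (k.choose j : ℝ) * Gamma (↑j + 1/2) * Gamma ((k-j : ℕ) + 1/2) := by
        rw [Finset.mul_sum]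
        refine Finset.sum_congr rfl fun j hj => ?_
        have hjk : j ≤ k := Nat.lt_succ_iff.mp (Finset.mem_range.mp hj)
        have hc : ((k - j : ℕ) : ℝ) = (k:ℝ) - (j:ℝ) := by
          push_cast [Nat.cast_sub hjk]; ring
        rw [hc]
        ring
      rw [hfinal, ih, Nat.factorial_succ]
      push_cast
      ring

def gam {n : ℕ} (a b : Fin n) (j k : ℕ) : Fin n → ℕ := fun i => if i = a then j else if i = b then k else 0

lemma prod_gam_pow {n : ℕ} (a b : Fin n) (hab : a ≠ b) (j k : ℕ) (x : Fin n → ℝ) :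
    ∏ i, (x i) ^ (2 * gam a b j k i) * Real.exp (-(x i)^2)
      = ((x a) ^ (2*j) * (x b) ^ (2*k)) * Real.exp (-(∑ i, (x i)^2)) := by
  classical
  rw [Finset.prod_mul_distrib, ← Real.exp_sum]
  have h1 : ∑ i : Fin n, (-(x i)^2) = -(∑ i, (x i)^2) := by
    rw [← Finset.sum_neg_distrib]
  rw [h1]
  congr 1
  rw [← Finset.mul_prod_erase Finset.univ _ (Finset.mem_univ a),
    ← Finset.mul_prod_erase (Finset.univ.erase a) _
      (Finset.mem_erase.2 ⟨Ne.symm hab, Finset.mem_univ b⟩)]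
  have hz : ∏ i ∈ (Finset.univ.erase a).erase b, (x i) ^ (2 * gam a b j k i) = 1 := by
    refine Finset.prod_eq_one fun i hi => ?_
    have hib : i ≠ b := (Finset.mem_erase.mp hi).1
    have hia : i ≠ a := (Finset.mem_erase.mp (Finset.mem_erase.mp hi).2).1
    simp [gam, hia, hib]
  rw [hz]
  have hb' : b ≠ a := Ne.symm hab
  simp [gam, hb']
lemma pi_term_integrable {n : ℕ} (a b : Fin n) (hab : a ≠ b) (j k : ℕ) :
    Integrable (fun x : Fin n → ℝ =>
      ((x a) ^ (2*j) * (x b) ^ (2*k)) * Real.exp (-(∑ i, (x i)^2))) := by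
  have := Integrable.fintype_prod (E := ℝ)
    (f := fun i (t:ℝ) => t ^ (2 * gam a b j k i) * Real.exp (-t^2))
    (fun i => integrable_even_moment _)
  refine this.congr (ae_of_all _ fun x => ?_)
  exact (prod_gam_pow a b hab j k x)

lemma pi_term_integral {n : ℕ} (a b : Fin n) (hab : a ≠ b) (j k : ℕ) :
    ∫ x : Fin n → ℝ, ((x a) ^ (2*j) * (x b) ^ (2*k)) * Real.exp (-(∑ i, (x i)^2))
      = Gamma (j + 1/2) * Gamma (k + 1/2) * Real.sqrt π ^ (n - 2) := by
  classical
  rw [show (fun x : Fin n → ℝ => ((x a) ^ (2*j) * (x b) ^ (2*k)) * Real.exp (-(∑ i, (x i)^2)))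
      = fun x : Fin n → ℝ => ∏ i, (x i) ^ (2 * gam a b j k i) * Real.exp (-(x i)^2) by
    funext x; rw [prod_gam_pow a b hab]]
  rw [MeasureTheory.integral_fintype_prod_volume_eq_prod (ι := Fin n)
    (f := fun i (t:ℝ) => t ^ (2 * gam a b j k i) * Real.exp (-t^2))]
  simp only [moment_eq]
  rw [← Finset.mul_prod_erase Finset.univ _ (Finset.mem_univ a),
    ← Finset.mul_prod_erase (Finset.univ.erase a) _
      (Finset.mem_erase.2 ⟨Ne.symm hab, Finset.mem_univ b⟩)]
  have hrest : ∏ i ∈ (Finset.univ.erase a).erase b, Gamma ((gam a b j k i : ℝ) + 1/2)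
      = Real.sqrt π ^ (n - 2) := by
    have hval : ∀ i ∈ (Finset.univ.erase a).erase b,
        Gamma ((gam a b j k i : ℝ) + 1/2) = Real.sqrt π := by
      intro i hi
      have hib : i ≠ b := (Finset.mem_erase.mp hi).1
      have hia : i ≠ a := (Finset.mem_erase.mp (Finset.mem_erase.mp hi).2).1
      simp only [gam, if_neg hia, if_neg hib, Nat.cast_zero, zero_add]
      rw [show (1:ℝ)/2 = 1/2 from rfl, Real.Gamma_one_half_eq]
    rw [Finset.prod_congr rfl hval, Finset.prod_const, Finset.card_erase_of_mem
      (Finset.mem_erase.2 ⟨Ne.symm hab, Finset.mem_univ b⟩), Finset.card_erase_of_mem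
      (Finset.mem_univ a), Finset.card_univ, Fintype.card_fin]
    rfl
  rw [hrest]
  have hb' : b ≠ a := Ne.symm hab
  simp [gam, hb']
  ring

lemma J_eq {n : ℕ} (a b : Fin n) (hab : a ≠ b) (k : ℕ) :
    ∫ x : Fin n → ℝ, ((x a)^2 + (x b)^2)^k * Real.exp (-(∑ i, (x i)^2))
      = π * k.factorial * Real.sqrt π ^ (n - 2) := by
  have hpt : ∀ x : Fin n → ℝ, ((x a)^2 + (x b)^2)^k * Real.exp (-(∑ i, (x i)^2))
      = ∑ j ∈ range (k+1), (k.choose j : ℝ) *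
          (((x a) ^ (2*j) * (x b) ^ (2*(k-j))) * Real.exp (-(∑ i, (x i)^2))) := by
    intro x
    rw [add_pow, Finset.sum_mul]
    refine Finset.sum_congr rfl fun j hj => ?_
    rw [← pow_mul, ← pow_mul]
    ring
  simp only [hpt]
  rw [MeasureTheory.integral_finset_sum _ (fun j _ =>
    ((pi_term_integrable a b hab j (k-j)).const_mul _))]
  have : ∀ j ∈ range (k+1), (∫ x : Fin n → ℝ, (k.choose j : ℝ) *
        (((x a) ^ (2*j) * (x b) ^ (2*(k-j))) * Real.exp (-(∑ i, (x i)^2))))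
      = (k.choose j : ℝ) * (Gamma (j + 1/2) * Gamma ((k-j:ℕ) + 1/2)
          * Real.sqrt π ^ (n - 2)) := by
    intro j hj
    rw [MeasureTheory.integral_const_mul, pi_term_integral a b hab]
  rw [Finset.sum_congr rfl this]
  have : ∑ j ∈ range (k+1), (k.choose j : ℝ) * (Gamma (j + 1/2) * Gamma ((k-j:ℕ) + 1/2)
          * Real.sqrt π ^ (n - 2))
      = (∑ j ∈ range (k+1), (k.choose j : ℝ) * Gamma (j + 1/2) * Gamma ((k-j:ℕ) + 1/2))
          * Real.sqrt π ^ (n - 2) := by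
    rw [Finset.sum_mul]
    exact Finset.sum_congr rfl fun j hj => by ring
  rw [this, W_eq]


lemma zb_pow_isHomogeneous {n : ℕ} (a b : Fin n) (m : ℕ) :
    ((zb a b) ^ m).IsHomogeneous m := by
  have h1 : (zb a b).IsHomogeneous 1 :=
    (isHomogeneous_X ℂ a).add (isHomogeneous_C_mul_X Complex.I b)
  simpa using h1.pow m

lemma evalR_zb_pow {n : ℕ} (a b : Fin n) (m : ℕ) (x : Fin n → ℝ) :
    evalR ((zb a b)^m) x = (((x a : ℂ)) + Complex.I * (x b : ℂ))^m := by
  simp [evalR, zb]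

lemma abs_sq_zb {n : ℕ} (a b : Fin n) (m : ℕ) (x : Fin n → ℝ) :
    ‖evalR ((zb a b)^m) x‖ ^ 2 = ((x a)^2 + (x b)^2)^m := by
  rw [evalR_zb_pow, norm_pow, ← pow_mul, mul_comm m 2, pow_mul, Complex.sq_norm,
    mul_comm Complex.I _, Complex.normSq_add_mul_I]

lemma evalR_radSq {n : ℕ} (x : Fin n → ℝ) :
    evalR (radSq n) x = ((∑ i, (x i)^2 : ℝ) : ℂ) := by
  simp [evalR, radSq]

lemma abs_sq_radSq_zb {n : ℕ} (a b : Fin n) (p m : ℕ) (x : Fin n → ℝ) :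
    ‖evalR (radSq n ^ p * (zb a b)^m) x‖ ^ 2
      = ((∑ i, (x i)^2)^2)^p * ((x a)^2 + (x b)^2)^m := by
  have : evalR (radSq n ^ p * (zb a b)^m) x
      = ((∑ i, (x i)^2 : ℝ) : ℂ)^p * evalR ((zb a b)^m) x := by
    unfold evalR
    rw [_root_.map_mul, map_pow]
    rw [show (MvPolynomial.eval fun i => (x i : ℂ)) (radSq n) = ((∑ i, (x i)^2 : ℝ) : ℂ)
      from evalR_radSq x]
  rw [this, norm_mul, mul_pow, norm_pow, abs_sq_zb]
  congr 1
  rw [← pow_mul, mul_comm p 2, pow_mul]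
  congr 1
  rw [Complex.sq_norm, Complex.normSq_ofReal, sq]

lemma rFNorm_C_mul {n : ℕ} (c : ℂ) (f : MvPolynomial (Fin n) ℂ) :
    rFNorm (C c * f) = ‖c‖ * rFNorm f := by
  unfold rFNorm
  rw [show (fun x : Fin n → ℝ => ‖evalR (C c * f) x‖ ^ 2
        * Real.exp (-(∑ i, x i ^ 2)))
      = fun x => ‖c‖ ^ 2 * (‖evalR f x‖ ^ 2
        * Real.exp (-(∑ i, x i ^ 2))) from funext fun x => by
    unfold evalR
    rw [_root_.map_mul, eval_C, norm_mul, mul_pow]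
    ring]
  rw [MeasureTheory.integral_const_mul, Real.sqrt_mul (sq_nonneg _),
    Real.sqrt_sq (norm_nonneg _)]

lemma rFNorm_zb_pow {n : ℕ} (a b : Fin n) (hab : a ≠ b) (m : ℕ) :
    rFNorm ((zb a b)^m) = Real.sqrt (π * m.factorial * Real.sqrt π ^ (n - 2)) := by
  unfold rFNorm
  rw [show (fun x : Fin n → ℝ => ‖evalR ((zb a b)^m) x‖ ^ 2
        * Real.exp (-(∑ i, x i ^ 2)))
      = fun x => ((x a)^2 + (x b)^2)^m * Real.exp (-(∑ i, (x i)^2)) from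
    funext fun x => by rw [abs_sq_zb]]
  rw [J_eq a b hab]

lemma rFNorm_radSq_zb_ge {n : ℕ} (a b : Fin n) (hab : a ≠ b) (p m : ℕ) :
    Real.sqrt (π * (m+2*p).factorial * Real.sqrt π ^ (n - 2))
      ≤ rFNorm (radSq n ^ p * (zb a b)^m) := by
  unfold rFNorm
  rw [show (fun x : Fin n → ℝ => ‖evalR (radSq n ^ p * (zb a b)^m) x‖ ^ 2
        * Real.exp (-(∑ i, x i ^ 2)))
      = fun x => ((∑ i, (x i)^2)^2)^p * ((x a)^2 + (x b)^2)^m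
          * Real.exp (-(∑ i, (x i)^2)) from
    funext fun x => by rw [abs_sq_radSq_zb]]
  apply Real.sqrt_le_sqrt
  rw [← J_eq a b hab (m+2*p)]
  apply MeasureTheory.integral_mono_of_nonneg (ae_of_all _ fun x => by positivity)
    (integrable_big a b hab p m) (ae_of_all _ fun x => ?_)
  have hT : (0:ℝ) ≤ (x a)^2 + (x b)^2 := by positivity
  show ((x a)^2 + (x b)^2)^(m+2*p) * Real.exp (-(∑ i, (x i)^2))
      ≤ ((∑ i, (x i)^2)^2)^p * ((x a)^2 + (x b)^2)^m * Real.exp (-(∑ i, (x i)^2))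
  apply mul_le_mul_of_nonneg_right _ (Real.exp_pos _).le
  calc ((x a)^2 + (x b)^2)^(m+2*p)
      = ((x a)^2 + (x b)^2)^(2*p) * ((x a)^2 + (x b)^2)^m := by
        rw [← pow_add]; ring_nf
    _ ≤ ((∑ i, (x i)^2))^(2*p) * ((x a)^2 + (x b)^2)^m := by
        apply mul_le_mul_of_nonneg_right _ (by positivity)
        exact pow_le_pow_left₀ hT (T_le_S a b hab x) _
    _ = ((∑ i, (x i)^2)^2)^p * ((x a)^2 + (x b)^2)^m := by
        rw [← pow_mul, mul_comm 2 p, pow_mul]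


end SAux

end

/-- Proposition `dimone`: if `n > 1` and
`‖Δ^p(|x|^{2p} f_m)‖_rF ≥ C √(m^l) ‖|x|^{2p} f_m‖_rF` holds for all homogeneous `f_m` of
all degrees `m`, then `l = 0`. -/
theorem stmt_18 (n p l : ℕ) (hn : 1 < n) (hp : 1 ≤ p) (C : ℝ) (hC : 0 < C)
    (hest : ∀ (m : ℕ) (f : MvPolynomial (Fin n) ℂ), f.IsHomogeneous m →
      C * Real.sqrt ((m : ℝ) ^ l) * rFNorm (radSq n ^ p * f) ≤
        rFNorm (lapP^[p] (radSq n ^ p * f))) :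
    l = 0 := by
  classical
  by_contra hl
  have hl1 : 1 ≤ l := Nat.one_le_iff_ne_zero.mpr hl
  have a : Fin n := ⟨0, by omega⟩
  set a : Fin n := ⟨0, by omega⟩ with ha
  set b : Fin n := ⟨1, by omega⟩ with hb
  have hab : a ≠ b := by simp [ha, hb, Fin.ext_iff]
  set D : ℕ := 2^p * p.factorial * (n+2*p)^p with hD
  have hDpos : (0:ℝ) < D := by positivity
  set m : ℕ := ⌈(D:ℝ)^2 / C^2⌉₊ + 1 with hm
  have hm1 : 1 ≤ m := Nat.le_add_left 1 _
  have hB : (0:ℝ) < Real.pi * Real.sqrt Real.pi ^ (n - 2) := by positivity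
  -- main estimate applied to zb^m
  have hE := hest m _ (SAux.zb_pow_isHomogeneous a b m)
  rw [SAux.key_eigen a b hab m p, SAux.rFNorm_C_mul, SAux.rFNorm_zb_pow a b hab,
    Complex.norm_natCast] at hE
  have h1 : C * Real.sqrt ((m:ℝ)^l) * Real.sqrt (Real.pi * (m+2*p).factorial * Real.sqrt Real.pi ^ (n-2))
      ≤ (epm n p m : ℝ) * Real.sqrt (Real.pi * m.factorial * Real.sqrt Real.pi ^ (n-2)) := by
    calc C * Real.sqrt ((m:ℝ)^l)
          * Real.sqrt (Real.pi * (m+2*p).factorial * Real.sqrt Real.pi ^ (n-2))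
        ≤ C * Real.sqrt ((m:ℝ)^l) * rFNorm (radSq n ^ p * (SAux.zb a b)^m) :=
          mul_le_mul_of_nonneg_left (SAux.rFNorm_radSq_zb_ge a b hab p m)
            (by positivity)
      _ ≤ _ := hE
  have h2 := pow_le_pow_left₀ (by positivity) h1 2
  rw [mul_pow, mul_pow, mul_pow, Real.sq_sqrt (by positivity : (0:ℝ) ≤ (m:ℝ)^l),
    Real.sq_sqrt (by positivity : (0:ℝ) ≤ Real.pi * (m+2*p).factorial * Real.sqrt Real.pi ^ (n-2)),
    Real.sq_sqrt (by positivity : (0:ℝ) ≤ Real.pi * m.factorial * Real.sqrt Real.pi ^ (n-2))] at h2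
  -- cancel Real.pi * B
  have h3 : C^2 * (m:ℝ)^l * ((m+2*p).factorial : ℝ) ≤ (epm n p m : ℝ)^2 * m.factorial := by
    have h2' : (C^2 * (m:ℝ)^l * ((m+2*p).factorial : ℝ)) * (Real.pi * Real.sqrt Real.pi ^ (n-2))
        ≤ ((epm n p m : ℝ)^2 * m.factorial) * (Real.pi * Real.sqrt Real.pi ^ (n-2)) := by
      calc (C^2 * (m:ℝ)^l * ((m+2*p).factorial : ℝ)) * (Real.pi * Real.sqrt Real.pi ^ (n-2))
          = C^2 * (m:ℝ)^l * (Real.pi * (m+2*p).factorial * Real.sqrt Real.pi ^ (n-2)) := by ring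
        _ ≤ (epm n p m : ℝ)^2 * (Real.pi * m.factorial * Real.sqrt Real.pi ^ (n-2)) := h2
        _ = ((epm n p m : ℝ)^2 * m.factorial) * (Real.pi * Real.sqrt Real.pi ^ (n-2)) := by ring
    exact le_of_mul_le_mul_right h2' hB
  have hepm : (epm n p m : ℝ) ≤ (D:ℝ) * ((m:ℝ)+1)^p := by
    have := SAux.epm_le_nat n p m hn
    calc (epm n p m : ℝ) ≤ ((D * (m+1)^p : ℕ) : ℝ) := by exact_mod_cast this
      _ = (D:ℝ) * ((m:ℝ)+1)^p := by push_cast; ring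
  have hfact : (m.factorial : ℝ) * ((m:ℝ)+1)^(2*p) ≤ ((m+2*p).factorial : ℝ) := by
    have := SAux.fact_aux m (2*p)
    calc (m.factorial : ℝ) * ((m:ℝ)+1)^(2*p)
        = ((m.factorial * (m+1)^(2*p) : ℕ) : ℝ) := by push_cast; ring
      _ ≤ _ := by exact_mod_cast this
  have h4 : C^2 * (m:ℝ)^l * ((m.factorial : ℝ) * ((m:ℝ)+1)^(2*p))
      ≤ (D:ℝ)^2 * ((m.factorial : ℝ) * ((m:ℝ)+1)^(2*p)) := by
    calc C^2 * (m:ℝ)^l * ((m.factorial : ℝ) * ((m:ℝ)+1)^(2*p))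
        ≤ C^2 * (m:ℝ)^l * ((m+2*p).factorial : ℝ) :=
          mul_le_mul_of_nonneg_left hfact (by positivity)
      _ ≤ (epm n p m : ℝ)^2 * m.factorial := h3
      _ ≤ ((D:ℝ) * ((m:ℝ)+1)^p)^2 * m.factorial := by
          apply mul_le_mul_of_nonneg_right _ (by positivity)
          exact pow_le_pow_left₀ (by positivity) hepm 2
      _ = (D:ℝ)^2 * ((m.factorial : ℝ) * ((m:ℝ)+1)^(2*p)) := by
          rw [mul_pow, ← pow_mul]; ring
  have h5 : C^2 * (m:ℝ)^l ≤ (D:ℝ)^2 := by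
    have hpos : (0:ℝ) < (m.factorial : ℝ) * ((m:ℝ)+1)^(2*p) := by positivity
    exact le_of_mul_le_mul_right h4 hpos
  -- contradiction
  have hmgt : (D:ℝ)^2 / C^2 < (m:ℝ) := by
    have h := Nat.le_ceil ((D:ℝ)^2 / C^2)
    have : (⌈(D:ℝ)^2 / C^2⌉₊ : ℝ) < m := by
      rw [hm]; push_cast; linarith
    linarith
  have h6 : (D:ℝ)^2 < C^2 * m := by
    rw [div_lt_iff₀ (by positivity)] at hmgt
    linarith [hmgt]
  have h7 : (m:ℝ) ≤ (m:ℝ)^l := by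
    calc (m:ℝ) = (m:ℝ)^1 := (pow_one _).symm
      _ ≤ (m:ℝ)^l := pow_le_pow_right₀ (by exact_mod_cast hm1) hl1
  have h8 : C^2 * (m:ℝ) ≤ C^2 * (m:ℝ)^l := mul_le_mul_of_nonneg_left h7 (sq_nonneg C)
  linarith
end
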